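/- arXiv:2411.02658 — 7 statements merged into one kernel-verified Lean document; each statement's English description precedes it below -/
import Mathlib

section
/- For every finite graph G and every integer k ≥ 1, there exists a k-Gomory-Hu tree of G. -/
open Finset SimpleGraph

variable {V : Type} [Fintype V] [DecidableEq V]

/-- `C` is a `(u,v)`-cutset of `G`: `C` is the set of edges of `G` with one endpoint in `A`
and one endpoint in `B`, for some partition `(A, B)` of the vertex set with `u ∈ A`, `v ∈ B`. -/
def IsCutset (G : SimpleGraph V) (u v : V) (C : Finset (Sym2 V)) : Prop :=
  ∃ A B : Finset V, A ∪ B = Finset.univ ∧ Disjoint A B ∧ u ∈ A ∧ v ∈ B ∧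
    ∀ e : Sym2 V, e ∈ C ↔ ∃ a ∈ A, ∃ b ∈ B, G.Adj a b ∧ e = s(a, b)

/-!
Uncrossing: if a minimum `(a, b)`-cut `X` crosses a minimum `(u, v)`-cut `Y`, submodularity of
the cut function makes `X` itself or one of the unions `X' ∪ Y'` (`X' ∈ {X, Xᶜ}`,
`Y' ∈ {Y, Yᶜ}`) a minimum `(u, v)`-cut, and a set crossing such a union crosses `X` or `Y`.
Hence, given a cross-free family of minimum cuts, some minimum `(u, v)`-cut crosses none of its
members, and adding one such cut for every pair `u, v` with a cut of size `< k` yields a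
cross-free family serving all these pairs. Replacing each member by its side avoiding a fixed
vertex `r` makes the family laminar; the Hasse diagram of the family together with `univ` under
inclusion is then the tree, with `γ v` the smallest member containing `v` and the edge below a
member `X` carrying the cut of `X`.
-/

open Classical in
noncomputable def edgeCut (G : SimpleGraph V) (X : Finset V) : Finset (Sym2 V) :=
  {e | e ∈ G.edgeSet ∧ ∃ a ∈ X, ∃ b ∉ X, e = s(a, b)}

def Separates {α : Type*} (X : Finset α) (u v : α) : Prop := (u ∈ X ↔ v ∉ X)

def IsMinCut (G : SimpleGraph V) (u v : V) (X : Finset V) : Prop :=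
  Separates X u v ∧ ∀ Y, Separates Y u v → (edgeCut G X).card ≤ (edgeCut G Y).card

section Separates

variable {α : Type*} {X : Finset α} {u v : α}

lemma Separates.symm (h : Separates X u v) : Separates X v u := by
  unfold Separates at *; tauto

lemma Separates.nonempty (h : Separates X u v) : X.Nonempty := by
  by_cases hu : u ∈ X
  · exact ⟨u, hu⟩
  · exact ⟨v, by unfold Separates at h; tauto⟩

end Separates

section Cuts

variable {G : SimpleGraph V} {X Y : Finset V} {u v : V}

lemma mem_edgeCut {e : Sym2 V} :
    e ∈ edgeCut G X ↔ e ∈ G.edgeSet ∧ ∃ a ∈ X, ∃ b ∉ X, e = s(a, b) := by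
  simp [edgeCut]

lemma mk_mem_edgeCut {x y : V} : s(x, y) ∈ edgeCut G X ↔ G.Adj x y ∧ (x ∈ X ↔ y ∉ X) := by
  rw [mem_edgeCut, mem_edgeSet]
  constructor
  · rintro ⟨hxy, a, ha, b, hb, hab⟩
    obtain ⟨rfl, rfl⟩ | ⟨rfl, rfl⟩ := Sym2.eq_iff.1 hab <;> tauto
  · rintro ⟨hxy, hX⟩
    by_cases hx : x ∈ X
    · exact ⟨hxy, x, hx, y, hX.1 hx, rfl⟩
    · exact ⟨hxy, y, by tauto, x, hx, Sym2.eq_swap⟩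

@[simp] lemma edgeCut_compl : edgeCut G Xᶜ = edgeCut G X := by
  ext e
  induction e using Sym2.ind
  simp only [mk_mem_edgeCut, mem_compl]
  tauto

lemma card_edgeCut_inter_add_card_edgeCut_union :
    (edgeCut G (X ∩ Y)).card + (edgeCut G (X ∪ Y)).card ≤
      (edgeCut G X).card + (edgeCut G Y).card := by
  have hunion : edgeCut G (X ∩ Y) ∪ edgeCut G (X ∪ Y) ⊆ edgeCut G X ∪ edgeCut G Y := by
    intro e
    induction e using Sym2.ind
    simp only [mem_union, mk_mem_edgeCut, mem_inter]
    tauto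
  have hinter : edgeCut G (X ∩ Y) ∩ edgeCut G (X ∪ Y) ⊆ edgeCut G X ∩ edgeCut G Y := by
    intro e
    induction e using Sym2.ind
    simp only [mem_inter, mk_mem_edgeCut, mem_union]
    tauto
  rw [← card_union_add_card_inter, ← card_union_add_card_inter (edgeCut G X)]
  exact add_le_add (card_le_card hunion) (card_le_card hinter)

@[simp] lemma separates_compl : Separates Xᶜ u v ↔ Separates X u v := by
  simp only [Separates, mem_compl]; tauto

lemma isCutset_edgeCut (h : Separates X u v) : IsCutset G u v (edgeCut G X) := by
  wlog hu : u ∈ X generalizing X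
  · simpa using this (separates_compl.2 h) (mem_compl.2 hu)
  refine ⟨X, Xᶜ, by simp, disjoint_compl_right, hu, mem_compl.2 (h.1 hu), fun e => ?_⟩
  simp only [mem_edgeCut, mem_compl]
  constructor
  · rintro ⟨he, a, ha, b, hb, rfl⟩
    exact ⟨a, ha, b, hb, he, rfl⟩
  · rintro ⟨a, ha, b, hb, hab, rfl⟩
    exact ⟨hab, a, ha, b, hb, rfl⟩

lemma IsCutset.exists_eq_edgeCut {C : Finset (Sym2 V)} (h : IsCutset G u v C) :
    ∃ X, Separates X u v ∧ C = edgeCut G X := by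
  obtain ⟨A, B, hAB, hdisj, hu, hv, hC⟩ := h
  have hB : ∀ x, x ∈ B ↔ x ∉ A := fun x => by
    have hx : x ∈ A ∨ x ∈ B := mem_union.1 (hAB ▸ mem_univ x)
    have hAB' : x ∈ A → x ∉ B := fun h => disjoint_left.1 hdisj h
    tauto
  refine ⟨A, ⟨fun _ => (hB v).1 hv, fun _ => hu⟩, ?_⟩
  ext e
  simp only [hC, mem_edgeCut, hB]
  constructor
  · rintro ⟨a, ha, b, hb, hab, rfl⟩
    exact ⟨hab, a, ha, b, hb, rfl⟩
  · rintro ⟨he, a, ha, b, hb, rfl⟩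
    exact ⟨a, ha, b, hb, he, rfl⟩

lemma exists_isMinCut (h : Separates X u v) : ∃ Y, IsMinCut G u v Y := by
  classical
  obtain ⟨Y, hY, hmin⟩ := exists_min_image ({Z | Separates Z u v} : Finset (Finset V))
    (fun Z => (edgeCut G Z).card) ⟨X, by simpa using h⟩
  simp only [mem_filter, mem_univ, true_and] at hY hmin
  exact ⟨Y, hY, hmin⟩

lemma IsMinCut.compl (h : IsMinCut G u v X) : IsMinCut G u v Xᶜ := by
  simpa [IsMinCut] using h

end Cuts

def Crosses {α : Type*} (X Y : Finset α) : Prop :=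
  (∃ a ∈ X, a ∈ Y) ∧ (∃ a ∈ X, a ∉ Y) ∧ (∃ a ∉ X, a ∈ Y) ∧ ∃ a ∉ X, a ∉ Y

def IsCrossFree {α : Type*} (F : Finset (Finset α)) : Prop := ∀ X ∈ F, ∀ Y ∈ F, ¬ Crosses X Y

def IsLaminar {α : Type*} (L : Finset (Finset α)) : Prop :=
  ∀ X ∈ L, ∀ Y ∈ L, X ⊆ Y ∨ Y ⊆ X ∨ Disjoint X Y

section Crosses

variable {α : Type*} {X Y Z : Finset α}

lemma Crosses.symm (h : Crosses X Y) : Crosses Y X := by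
  obtain ⟨⟨a, ha⟩, ⟨b, hb⟩, ⟨c, hc⟩, ⟨d, hd⟩⟩ := h
  exact ⟨⟨a, ha.2, ha.1⟩, ⟨c, hc.2, hc.1⟩, ⟨b, hb.2, hb.1⟩, ⟨d, hd.2, hd.1⟩⟩

lemma not_crosses_of_subset (h : X ⊆ Y) : ¬ Crosses X Y :=
  fun ⟨_, ⟨_, ha, ha'⟩, _⟩ => ha' (h ha)

lemma Crosses.crosses_or_crosses_of_crosses_union [DecidableEq α] (hXY : Crosses X Y)
    (hZ : Crosses Z (X ∪ Y)) : Crosses Z X ∨ Crosses Z Y := by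
  obtain ⟨⟨i, hiX, hiY⟩, -⟩ := hXY
  obtain ⟨⟨p, hpZ, hp⟩, ⟨q, hqZ, hq⟩, ⟨s, hsZ, hs⟩, ⟨t, htZ, ht⟩⟩ := hZ
  simp only [mem_union, not_or] at hp hq hs ht
  have crossesX : ∀ p' ∈ Z, p' ∈ X → ∀ s' ∉ Z, s' ∈ X → Crosses Z X :=
    fun p' hp' hpX s' hs' hsX => ⟨⟨p', hp', hpX⟩, ⟨q, hqZ, hq.1⟩, ⟨s', hs', hsX⟩, ⟨t, htZ, ht.1⟩⟩
  have crossesY : ∀ p' ∈ Z, p' ∈ Y → ∀ s' ∉ Z, s' ∈ Y → Crosses Z Y :=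
    fun p' hp' hpY s' hs' hsY => ⟨⟨p', hp', hpY⟩, ⟨q, hqZ, hq.2⟩, ⟨s', hs', hsY⟩, ⟨t, htZ, ht.2⟩⟩
  by_cases hiZ : i ∈ Z
  · rcases hs with hsX | hsY
    · exact .inl (crossesX i hiZ hiX s hsZ hsX)
    · exact .inr (crossesY i hiZ hiY s hsZ hsY)
  · rcases hp with hpX | hpY
    · exact .inl (crossesX p hpZ hpX i hiZ hiX)
    · exact .inr (crossesY p hpZ hpY i hiZ hiY)

lemma subset_or_subset_or_disjoint_of_not_crosses (h : ¬ Crosses X Y) {r : α} (hX : r ∉ X)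
    (hY : r ∉ Y) : X ⊆ Y ∨ Y ⊆ X ∨ Disjoint X Y := by
  by_contra hc
  simp only [not_or, Finset.not_subset, Finset.not_disjoint_iff] at hc
  obtain ⟨⟨a, haX, haY⟩, ⟨b, hbY, hbX⟩, ⟨c, hcX, hcY⟩⟩ := hc
  exact h ⟨⟨c, hcX, hcY⟩, ⟨a, haX, haY⟩, ⟨b, hbX, hbY⟩, ⟨r, hX, hY⟩⟩

variable [Fintype α] [DecidableEq α]

@[simp] lemma crosses_compl_left : Crosses Xᶜ Y ↔ Crosses X Y := by
  simp only [Crosses, mem_compl]; tauto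

@[simp] lemma crosses_compl_right : Crosses X Yᶜ ↔ Crosses X Y := by
  simp only [Crosses, mem_compl]; tauto

end Crosses

section Uncrossing

variable {G : SimpleGraph V} {X Y : Finset V} {a b u v : V}

lemma IsMinCut.union (hX : IsMinCut G a b X) (hY : IsMinCut G u v Y)
    (hab : Separates (X ∩ Y) a b) (huv : Separates (X ∪ Y) u v) : IsMinCut G u v (X ∪ Y) := by
  refine ⟨huv, fun Z hZ => ?_⟩
  have hXY := card_edgeCut_inter_add_card_edgeCut_union (G := G) (X := X) (Y := Y)
  have hX' := hX.2 _ hab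
  have hY' := hY.2 _ hZ
  omega

lemma separates_quadrants (hX : Separates X a b) (hY : Separates Y u v) :
    (Separates (X ∩ Y) a b ∧ Separates (X ∪ Y) u v) ∨
    (Separates (X ∩ Yᶜ) a b ∧ Separates (X ∪ Yᶜ) u v) ∨
    (Separates (Xᶜ ∩ Y) a b ∧ Separates (Xᶜ ∪ Y) u v) ∨
    (Separates (Xᶜ ∩ Yᶜ) a b ∧ Separates (Xᶜ ∪ Yᶜ) u v) ∨
    (Separates X u v ∧ Separates Y a b) := by
  simp only [Separates, mem_inter, mem_union, mem_compl] at *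
  by_cases ha : a ∈ X <;> by_cases hu : u ∈ Y <;> by_cases huX : u ∈ X <;>
    by_cases hvX : v ∈ X <;> by_cases haY : a ∈ Y <;> by_cases hbY : b ∈ Y <;> simp_all

lemma exists_isMinCut_of_crosses (hX : IsMinCut G a b X) (hY : IsMinCut G u v Y)
    (hXY : Crosses X Y) : ∃ Y', IsMinCut G u v Y' ∧ ¬ Crosses X Y' ∧
      ∀ Z : Finset V, Crosses Z Y' → Crosses Z X ∨ Crosses Z Y := by
  have quadrant : ∀ X' Y', (X' = X ∨ X' = Xᶜ) → (Y' = Y ∨ Y' = Yᶜ) →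
      Separates (X' ∩ Y') a b → Separates (X' ∪ Y') u v → ∃ Y', IsMinCut G u v Y' ∧
        ¬ Crosses X Y' ∧ ∀ Z : Finset V, Crosses Z Y' → Crosses Z X ∨ Crosses Z Y := by
    intro X' Y' hX' hY' hab huv
    have hXmin : IsMinCut G a b X' := by rcases hX' with rfl | rfl <;> simp [hX, hX.compl]
    have hYmin : IsMinCut G u v Y' := by rcases hY' with rfl | rfl <;> simp [hY, hY.compl]
    have hX'Z : ∀ Z, Crosses X' Z ↔ Crosses X Z := fun Z => by rcases hX' with rfl | rfl <;> simp
    have hZX' : ∀ Z, Crosses Z X' ↔ Crosses Z X := fun Z => by rcases hX' with rfl | rfl <;> simp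
    have hZY' : ∀ Z, Crosses Z Y' ↔ Crosses Z Y := fun Z => by rcases hY' with rfl | rfl <;> simp
    refine ⟨X' ∪ Y', hXmin.union hYmin hab huv, ?_, fun Z hZ => ?_⟩
    · rw [← hX'Z]
      exact not_crosses_of_subset subset_union_left
    · rw [← hZX', ← hZY']
      exact ((hX'Z Y').2 ((hZY' X).2 hXY)).crosses_or_crosses_of_crosses_union hZ
  rcases separates_quadrants hX.1 hY.1 with h | h | h | h | ⟨hXuv, hYab⟩
  · exact quadrant X Y (.inl rfl) (.inl rfl) h.1 h.2
  · exact quadrant X Yᶜ (.inl rfl) (.inr rfl) h.1 h.2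
  · exact quadrant Xᶜ Y (.inr rfl) (.inl rfl) h.1 h.2
  · exact quadrant Xᶜ Yᶜ (.inr rfl) (.inr rfl) h.1 h.2
  · exact ⟨X, ⟨hXuv, fun Z hZ => (hX.2 Y hYab).trans (hY.2 Z hZ)⟩,
      not_crosses_of_subset subset_rfl, fun _ => .inl⟩

end Uncrossing

section Families

variable {G : SimpleGraph V} {k : ℕ}

lemma exists_isMinCut_forall_not_crosses {F : Finset (Finset V)}
    (hmin : ∀ X ∈ F, ∃ a b, IsMinCut G a b X) (hF : IsCrossFree F)
    {Y₀ : Finset V} {u v : V} (h : Separates Y₀ u v) :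
    ∃ Y, IsMinCut G u v Y ∧ ∀ X ∈ F, ¬ Crosses X Y := by
  classical
  obtain ⟨Y₁, hY₁⟩ := exists_isMinCut (G := G) h
  obtain ⟨Y, hY, hfewest⟩ := exists_min_image ({Z | IsMinCut G u v Z} : Finset (Finset V))
    (fun Z => #{X ∈ F | Crosses X Z}) ⟨Y₁, by simpa using hY₁⟩
  simp only [mem_filter, mem_univ, true_and] at hY hfewest
  refine ⟨Y, hY, fun X hXF hXY => ?_⟩
  obtain ⟨a, b, hX⟩ := hmin X hXF
  obtain ⟨Y', hY', hXY', hcross⟩ := exists_isMinCut_of_crosses hX hY hXY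
  have hfewer : #{Z ∈ F | Crosses Z Y'} < #{Z ∈ F | Crosses Z Y} := by
    refine card_lt_card ((ssubset_iff_of_subset fun Z => ?_).2 ⟨X, ?_, ?_⟩)
    · simp only [mem_filter, and_imp]
      exact fun hZF hZ => ⟨hZF, (hcross Z hZ).resolve_left (hF Z hZF X hXF)⟩
    · simp [hXF, hXY]
    · simp [hXY']
  exact (hfewest Y' hY').not_gt hfewer

lemma exists_crossFree_minCut_family (G : SimpleGraph V) (k : ℕ) :
    ∃ F : Finset (Finset V), IsCrossFree F ∧
      (∀ X ∈ F, (edgeCut G X).card < k ∧ ∃ a b, IsMinCut G a b X) ∧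
      ∀ u v Y, Separates Y u v → (edgeCut G Y).card < k → ∃ X ∈ F, IsMinCut G u v X := by
  suffices ∀ P : Finset (V × V), ∃ F : Finset (Finset V), IsCrossFree F ∧
      (∀ X ∈ F, (edgeCut G X).card < k ∧ ∃ a b, IsMinCut G a b X) ∧
      ∀ p ∈ P, ∀ Y, Separates Y p.1 p.2 → (edgeCut G Y).card < k →
        ∃ X ∈ F, IsMinCut G p.1 p.2 X by
    obtain ⟨F, hF, hmin, hserve⟩ := this univ
    exact ⟨F, hF, hmin, fun u v => hserve (u, v) (mem_univ _)⟩
  intro P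
  induction P using Finset.induction_on with
  | empty => exact ⟨∅, by simp [IsCrossFree], by simp, by simp⟩
  | insert p P _ ih =>
    obtain ⟨F, hF, hmin, hserve⟩ := ih
    by_cases hp : ∃ Y, Separates Y p.1 p.2 ∧ (edgeCut G Y).card < k
    · obtain ⟨Y₀, hY₀, hY₀k⟩ := hp
      obtain ⟨Y, hY, hYF⟩ := exists_isMinCut_forall_not_crosses
        (fun X hX => (hmin X hX).2) hF hY₀
      refine ⟨insert Y F, ?_, ?_, ?_⟩
      · simp only [IsCrossFree, mem_insert, forall_eq_or_imp]
        exact ⟨⟨not_crosses_of_subset subset_rfl, fun X hX h => hYF X hX h.symm⟩,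
          fun X hX => ⟨hYF X hX, hF X hX⟩⟩
      · simp only [mem_insert, forall_eq_or_imp]
        exact ⟨⟨(hY.2 Y₀ hY₀).trans_lt hY₀k, _, _, hY⟩, hmin⟩
      · simp only [mem_insert, forall_eq_or_imp]
        exact ⟨fun _ _ _ => ⟨Y, .inl rfl, hY⟩, fun q hq Z hZ hZk =>
          (hserve q hq Z hZ hZk).imp fun X hX => ⟨.inr hX.1, hX.2⟩⟩
    · refine ⟨F, hF, hmin, ?_⟩
      simp only [mem_insert, forall_eq_or_imp]
      exact ⟨fun Y hY hYk => absurd ⟨Y, hY, hYk⟩ hp, hserve⟩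

end Families

namespace SimpleGraph.Walk

variable {β : Type*} {H : SimpleGraph β} {S : Set β} {a b : β}

lemma mem_edges_of_boundary (hS : ∀ x y, H.Adj x y → x ∈ S → y ∉ S → s(x, y) = s(a, b))
    {x y : β} (p : H.Walk x y) (hx : x ∈ S) (hy : y ∉ S) : s(a, b) ∈ p.edges := by
  obtain ⟨d, hd, hd₁, hd₂⟩ := p.exists_boundary_dart S hx hy
  rw [← hS _ _ d.adj hd₁ hd₂]
  exact List.mem_map_of_mem hd

lemma mem_iff_mem_of_notMem_edges (hS : ∀ x y, H.Adj x y → x ∈ S → y ∉ S → s(x, y) = s(a, b))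
    {x y : β} (p : H.Walk x y) (he : s(a, b) ∉ p.edges) : x ∈ S ↔ y ∈ S := by
  refine ⟨fun hx => ?_, fun hy => ?_⟩ <;> by_contra h
  · exact he (p.mem_edges_of_boundary hS hx h)
  · exact he (by simpa using p.reverse.mem_edges_of_boundary hS hy h)

lemma IsTrail.mem_iff_notMem_of_mem_edges
    (hS : ∀ x y, H.Adj x y → x ∈ S → y ∉ S → s(x, y) = s(a, b)) (ha : a ∈ S) (hb : b ∉ S)
    {x y : β} {p : H.Walk x y} (hp : p.IsTrail) (he : s(a, b) ∈ p.edges) : x ∈ S ↔ y ∉ S := by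
  induction p with
  | nil => simp at he
  | @cons x x' y h p ih =>
    rw [isTrail_cons] at hp
    rw [edges_cons, List.mem_cons] at he
    rcases he with he | he
    · have hx' : x' ∈ S ↔ y ∈ S := p.mem_iff_mem_of_notMem_edges hS (he ▸ hp.2)
      rcases Sym2.eq_iff.1 he with ⟨rfl, rfl⟩ | ⟨rfl, rfl⟩ <;> tauto
    · have hstep : x ∈ S ↔ x' ∈ S := (cons h Walk.nil).mem_iff_mem_of_notMem_edges hS <| by
        rw [edges_cons, edges_nil, List.mem_singleton]
        exact fun h' => hp.2 (h' ▸ he)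
      rw [hstep]
      exact ih hp.1 he

end SimpleGraph.Walk

section HasseTree

variable {P : Type*} [PartialOrder P]

lemma CovBy.eq_of_upperSet_chain (hchain : ∀ a b c : P, a ≤ b → a ≤ c → b ≤ c ∨ c ≤ b)
    {x y y' : P} (h : x ⋖ y) (h' : x ⋖ y') : y = y' := by
  rcases hchain x y y' h.le h'.le with hle | hle
  · exact (h'.eq_or_eq h.le hle).resolve_left h.lt.ne'
  · exact ((h.eq_or_eq h'.le hle).resolve_left h'.lt.ne').symm

lemma hasse_adj_Iic_boundary (hchain : ∀ a b c : P, a ≤ b → a ≤ c → b ≤ c ∨ c ≤ b) {x y : P}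
    (hxy : x ⋖ y) (z w : P) (hzw : (hasse P).Adj z w) (hz : z ∈ Set.Iic x)
    (hw : w ∉ Set.Iic x) : s(z, w) = s(x, y) := by
  rw [Set.mem_Iic] at hz hw
  rcases hasse_adj.1 hzw with h | h
  · have hxw : x ≤ w := (hchain z x w hz h.le).resolve_right hw
    obtain rfl : z = x := ((h.eq_or_eq hz hxw).resolve_right (fun h' => hw h'.ge)).symm
    rw [CovBy.eq_of_upperSet_chain hchain h hxy]
  · exact absurd (h.le.trans hz) hw

lemma isTree_hasse [Finite P] (hchain : ∀ a b c : P, a ≤ b → a ≤ c → b ≤ c ∨ c ≤ b)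
    {t : P} (ht : ∀ x, x ≤ t) : (hasse P).IsTree := by
  refine ⟨(connected_iff_exists_forall_reachable _).2 ⟨t, fun x => ?_⟩, ?_⟩
  · induction x using WellFoundedGT.induction with
    | ind x ih =>
      rcases (ht x).eq_or_lt with rfl | hlt
      · rfl
      · obtain ⟨y, hxy, -⟩ := exists_covBy_le_of_lt hlt
        exact (ih y hxy.lt).trans (hasse_adj.2 (.inl hxy)).reachable.symm
  · rw [isAcyclic_iff_forall_adj_isBridge]
    intro x y hxy
    wlog h : x ⋖ y generalizing x y
    · rw [Sym2.eq_swap]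
      exact this hxy.symm ((hasse_adj.1 hxy).resolve_left h)
    rw [isBridge_iff_forall_walk_mem_edges]
    exact fun p => p.mem_edges_of_boundary (hasse_adj_Iic_boundary hchain h) le_rfl h.lt.not_ge

end HasseTree

section Laminar

variable {α : Type*} {L : Finset (Finset α)}

lemma IsLaminar.subset_or_subset_of_subset (hL : IsLaminar L) {A B C : Finset α}
    (hA : A.Nonempty) (hB : B ∈ L) (hC : C ∈ L) (hAB : A ⊆ B) (hAC : A ⊆ C) :
    B ⊆ C ∨ C ⊆ B := by
  obtain ⟨x, hx⟩ := hA
  rcases hL B hB C hC with h | h | h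
  · exact .inl h
  · exact .inr h
  · exact absurd (hAC hx) (Finset.disjoint_left.1 h (hAB hx))

lemma IsLaminar.exists_least_mem [DecidableEq α] (hL : IsLaminar L) {u : α}
    (h : ∃ X ∈ L, u ∈ X) : ∃ X ∈ L, u ∈ X ∧ ∀ Y ∈ L, u ∈ Y → X ⊆ Y := by
  obtain ⟨X, hX, hmin⟩ := exists_min_image {X ∈ L | u ∈ X} card <| by
    obtain ⟨X, hX, hu⟩ := h
    exact ⟨X, mem_filter.2 ⟨hX, hu⟩⟩
  simp only [mem_filter, and_imp] at hX hmin
  refine ⟨X, hX.1, hX.2, fun Y hY hu => ?_⟩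
  rcases hL X hX.1 Y hY with h | h | h
  · exact h
  · exact (eq_of_subset_of_card_le h (hmin Y hY hu)).ge
  · exact absurd hu (Finset.disjoint_left.1 h hX.2)

variable [Fintype α] [DecidableEq α]

lemma IsLaminar.insert_univ (hL : IsLaminar L) : IsLaminar (insert univ L) := by
  simp only [IsLaminar, mem_insert, forall_eq_or_imp, subset_univ, true_or, or_true,
    implies_true, true_and]
  exact hL

end Laminar

lemma exists_laminar_minCut_family (G : SimpleGraph V) (k : ℕ) (r : V) :
    ∃ L : Finset (Finset V), IsLaminar L ∧
      (∀ X ∈ L, X.Nonempty ∧ r ∉ X ∧ (edgeCut G X).card < k) ∧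
      ∀ u v Y, Separates Y u v → (edgeCut G Y).card < k → ∃ X ∈ L, IsMinCut G u v X := by
  obtain ⟨F, hF, hmin, hserve⟩ := exists_crossFree_minCut_family G k
  let orient (X : Finset V) : Finset V := if r ∈ X then Xᶜ else X
  have horient : ∀ X, (orient X = X ∨ orient X = Xᶜ) ∧ r ∉ orient X := fun X => by
    by_cases hr : r ∈ X <;> simp [orient, hr]
  have hcross : ∀ X Y, Crosses (orient X) (orient Y) ↔ Crosses X Y := fun X Y => by
    rcases (horient X).1 with hX | hX <;> rcases (horient Y).1 with hY | hY <;> simp [hX, hY]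
  have hmincut : ∀ {u v} X, IsMinCut G u v X → IsMinCut G u v (orient X) := fun X hX => by
    rcases (horient X).1 with h | h <;> simp only [h, hX, hX.compl]
  refine ⟨F.image orient, ?_, ?_, ?_⟩
  · simp only [IsLaminar, forall_mem_image]
    exact fun X hX Y hY => subset_or_subset_or_disjoint_of_not_crosses
      ((hcross X Y).not.2 (hF X hX Y hY)) (horient X).2 (horient Y).2
  · simp only [forall_mem_image]
    intro X hX
    obtain ⟨hk, a, b, hab⟩ := hmin X hX
    refine ⟨(hmincut X hab).1.nonempty, (horient X).2, ?_⟩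
    rcases (horient X).1 with h | h <;> simpa [h] using hk
  · intro u v Y hY hYk
    obtain ⟨X, hX, huv⟩ := hserve u v Y hY hYk
    exact ⟨orient X, mem_image_of_mem _ hX, hmincut X huv⟩

theorem exists_tree_of_laminar (L : Finset (Finset V)) (r : V) (hL : IsLaminar L)
    (hne : ∀ X ∈ L, X.Nonempty ∧ r ∉ X) :
    ∃ (W : Type) (_ : Fintype W) (T : SimpleGraph W) (γ : V → W) (β : Sym2 W → Finset V),
      T.IsTree ∧
      (∀ e ∈ T.edgeSet, β e ∈ L ∧ ∀ u v, ∀ p : T.Walk (γ u) (γ v), p.IsTrail → e ∈ p.edges →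
        Separates (β e) u v) ∧
      ∀ X ∈ L, ∃ e, β e = X ∧ ∀ u v, Separates X u v → ∀ p : T.Walk (γ u) (γ v), e ∈ p.edges := by
  have hN := hL.insert_univ
  let P := {X // X ∈ insert univ L}
  let top : P := ⟨univ, mem_insert_self _ _⟩
  have hchain : ∀ A B C : P, A ≤ B → A ≤ C → B ≤ C ∨ C ≤ B := fun A B C =>
    hN.subset_or_subset_of_subset (by
      rcases mem_insert.1 A.2 with h | h
      · exact ⟨r, by rw [h]; exact mem_univ r⟩
      · exact (hne _ h).1) B.2 C.2
  have hγ : ∀ u, ∃ X : P, u ∈ X.1 ∧ ∀ Y : P, u ∈ Y.1 → X ≤ Y := fun u => by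
    obtain ⟨X, hX, hu, hmin⟩ := hN.exists_least_mem ⟨univ, mem_insert_self _ _, mem_univ u⟩
    exact ⟨⟨X, hX⟩, hu, fun Y => hmin Y.1 Y.2⟩
  choose γ hγ using hγ
  have hγle : ∀ u (X : P), γ u ≤ X ↔ u ∈ X.1 := fun u X => ⟨fun h => h (hγ u).1, (hγ u).2 X⟩
  let β : Sym2 P → Finset V := Sym2.lift ⟨fun X Y => X.1 ∩ Y.1, fun X Y => inter_comm _ _⟩
  have hβ : ∀ X Y : P, X ⋖ Y → β s(X, Y) = X.1 := fun X Y h => inter_eq_left.2 h.le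
  refine ⟨P, inferInstance, hasse P, γ, β, isTree_hasse hchain (t := top) fun X => subset_univ _,
    fun e he => ?_, fun X hX => ?_⟩
  · induction e using Sym2.ind with | h x y =>
    wlog hxy : x ⋖ y generalizing x y
    · rw [Sym2.eq_swap]
      exact this y x (by rwa [Sym2.eq_swap]) ((hasse_adj.1 he).resolve_left hxy)
    rw [hβ x y hxy]
    refine ⟨(mem_insert.1 x.2).resolve_left fun hx => ?_, fun u v p hp hxe => ?_⟩
    · exact (hxy.lt.trans_le (show y ≤ top from subset_univ _)).ne (Subtype.ext hx)
    · have := hp.mem_iff_notMem_of_mem_edges (hasse_adj_Iic_boundary hchain hxy)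
        (Set.mem_Iic.2 le_rfl) hxy.lt.not_ge hxe
      simpa only [Separates, Set.mem_Iic, hγle] using this
  · let x : P := ⟨X, mem_insert_of_mem hX⟩
    have hxtop : x < top := lt_of_le_of_ne (subset_univ _) fun h =>
      (hne X hX).2 (by rw [show X = univ from congrArg Subtype.val h]; exact mem_univ r)
    obtain ⟨y, hxy, -⟩ := exists_covBy_le_of_lt hxtop
    refine ⟨s(x, y), hβ x y hxy, fun u v huv p => ?_⟩
    wlog hu : u ∈ X generalizing u v
    · simpa using this v u huv.symm p.reverse (by unfold Separates at huv; tauto)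
    exact p.mem_edges_of_boundary (hasse_adj_Iic_boundary hchain hxy) ((hγle u x).2 hu)
      (by rw [Set.mem_Iic, hγle]; exact huv.1 hu)

theorem exists_kGomoryHu_tree_general (G : SimpleGraph V) (k : ℕ) :
    ∃ (W : Type) (_ : Fintype W) (T : SimpleGraph W) (γ : V → W)
      (α : Sym2 W → Finset (Sym2 V)),
      T.IsTree ∧
      (∀ u v : V, ∀ p : T.Walk (γ u) (γ v), p.IsPath → ∀ e ∈ p.edges,
        IsCutset G u v (α e) ∧ (α e).card < k) ∧
      (∀ u v : V, (∃ C : Finset (Sym2 V), IsCutset G u v C ∧ C.card < k) →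
        ∃ p : T.Walk (γ u) (γ v), p.IsPath ∧ ∃ e ∈ p.edges,
          IsCutset G u v (α e) ∧
          ∀ C' : Finset (Sym2 V), IsCutset G u v C' → (α e).card ≤ C'.card) := by
  rcases isEmpty_or_nonempty V with hV | ⟨⟨r⟩⟩
  · exact ⟨PUnit, inferInstance, hasse PUnit, isEmptyElim, fun _ => ∅,
      isTree_hasse (fun _ _ _ _ _ => .inl le_rfl) (t := ()) fun _ => le_rfl, isEmptyElim,
      isEmptyElim⟩
  obtain ⟨L, hL, hLcut, hserve⟩ := exists_laminar_minCut_family G k r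
  obtain ⟨W, _, T, γ, β, hT, hedge, hcover⟩ :=
    exists_tree_of_laminar L r hL fun X hX => ⟨(hLcut X hX).1, (hLcut X hX).2.1⟩
  refine ⟨W, inferInstance, T, γ, fun e => edgeCut G (β e), hT, fun u v p hp e he => ?_, ?_⟩
  · obtain ⟨hβ, hsep⟩ := hedge e (p.edges_subset_edgeSet he)
    exact ⟨isCutset_edgeCut (hsep u v p hp.isTrail he), (hLcut _ hβ).2.2⟩
  · rintro u v ⟨C, hC, hCk⟩
    obtain ⟨Y, hY, rfl⟩ := hC.exists_eq_edgeCut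
    obtain ⟨X, hX, hmin⟩ := hserve u v Y hY hCk
    obtain ⟨e, rfl, he⟩ := hcover X hX
    classical
    obtain ⟨p, hp⟩ := (hT.1.preconnected (γ u) (γ v)).some.toPath
    refine ⟨p, hp, e, he u v hmin.1 p, isCutset_edgeCut hmin.1, fun C' hC' => ?_⟩
    obtain ⟨Y', hY', rfl⟩ := hC'.exists_eq_edgeCut
    exact hmin.2 Y' hY'

/-- For every finite graph `G` and every integer `k ≥ 1`, there exists a `k`-Gomory-Hu tree
of `G`: a tree `T`, a map `γ : V(G) → V(T)` and an assignment `α` of edge sets of `G` to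
edges of `T` such that (1) for all `u, v` and every edge `e` on the `γ u`–`γ v` path in `T`,
`α e` is a `(u,v)`-cutset of size `< k`, and (2) whenever some `(u,v)`-cutset of size `< k`
exists, some edge `e` on the `γ u`–`γ v` path is such that `α e` is a minimum-size
`(u,v)`-cutset. -/
theorem exists_kGomoryHu_tree (G : SimpleGraph V) (k : ℕ) (hk : 1 ≤ k) :
    ∃ (W : Type) (_ : Fintype W) (T : SimpleGraph W) (γ : V → W)
      (α : Sym2 W → Finset (Sym2 V)),
      T.IsTree ∧
      (∀ u v : V, ∀ p : T.Walk (γ u) (γ v), p.IsPath → ∀ e ∈ p.edges,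
        IsCutset G u v (α e) ∧ (α e).card < k) ∧
      (∀ u v : V, (∃ C : Finset (Sym2 V), IsCutset G u v C ∧ C.card < k) →
        ∃ p : T.Walk (γ u) (γ v), p.IsPath ∧ ∃ e ∈ p.edges,
          IsCutset G u v (α e) ∧
          ∀ C' : Finset (Sym2 V), IsCutset G u v C' → (α e).card ≤ C'.card) :=
  exists_kGomoryHu_tree_general G k
end

section
/- Let G be a finite graph, k ≥ 1 an integer, and (T,bag) a tree decomposition of G in which every adhesion has size < k. If u and v are distinct vertices of G with flow*_G(u,v) ≥ k, then there is a node t ∈ V(T) with {u,v} ⊆ bag(t). -/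
/-!
Suppose no bag contains both `u` and `v`. On the tree path from a bag of `u` to a bag of `v`
let `st` be the edge at which `u` leaves the bags. Deleting `st` splits `T` into two sides, and
the unions `A`, `B` of the bags on the two sides separate `G`: every edge lies in one of them, and
by the subtree property `A ∩ B ⊆ bag s ∩ bag t`. Moreover `u ∉ B` and `v ∈ B \ A`. Each of the
`k` internally disjoint `u`–`v` paths crosses from outside `B` into `B` at a vertex of `A ∩ B`,
necessarily an inner vertex, so these `k` vertices are distinct and `k ≤ |bag s ∩ bag t| < k`.
-/

open Finset SimpleGraph

variable {V : Type} [Fintype V] [DecidableEq V]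

/-- `(T, bag)` is a tree decomposition of the graph `G`. -/
def IsTreeDecomp (G : SimpleGraph V) {W : Type} (T : SimpleGraph W)
    (bag : W → Finset V) : Prop :=
  T.IsTree ∧
  (∀ u v : V, G.Adj u v → ∃ t : W, u ∈ bag t ∧ v ∈ bag t) ∧
  (∀ v : V, (T.induce {t : W | v ∈ bag t}).Connected)

/-- There is a family of `k` pairwise internally vertex-disjoint paths from `u` to `v` in
`G`, i.e. `flow*_G(u, v) ≥ k` (the edge `uv`, if present, counts as one such path). -/
def InternallyDisjointPaths (G : SimpleGraph V) (u v : V) (k : ℕ) : Prop :=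
  ∃ P : Fin k → G.Walk u v,
    (∀ i, (P i).IsPath) ∧
    (∀ i j, i ≠ j → P i ≠ P j) ∧
    (∀ i j, i ≠ j → ∀ w : V, w ∈ (P i).support → w ∈ (P j).support → w = u ∨ w = v)

namespace SimpleGraph

variable {α : Type*} {G : SimpleGraph α}

/-- Unlike a separation in the usual sense, `A ∪ B` need not cover all vertices. -/
def IsSeparation (G : SimpleGraph α) (A B : Set α) : Prop :=
  ∀ ⦃x y⦄, G.Adj x y → (x ∈ A ∧ y ∈ A) ∨ (x ∈ B ∧ y ∈ B)

lemma IsSeparation.exists_mem_support_inter {A B : Set α} (hAB : G.IsSeparation A B)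
    {a b : α} (p : G.Walk a b) (ha : a ∉ B) (hb : b ∈ B) :
    ∃ y ∈ p.support, y ∈ A ∧ y ∈ B := by
  obtain ⟨d, hd, hd₁, hd₂⟩ := p.exists_boundary_dart Bᶜ ha (by simpa using hb)
  refine ⟨d.snd, p.dart_snd_mem_support_of_mem_darts hd, ?_, not_not.mp hd₂⟩
  rcases hAB d.adj with h | h
  · exact h.2
  · exact absurd h.1 hd₁

lemma exists_walk_support_subset_of_connected_induce {A : Set α}
    (hA : (G.induce A).Connected) {a b : α} (ha : a ∈ A) (hb : b ∈ A) :
    ∃ p : G.Walk a b, ∀ z ∈ p.support, z ∈ A := by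
  obtain ⟨q⟩ := hA.preconnected ⟨a, ha⟩ ⟨b, hb⟩
  have hq : ∀ z ∈ (q.map (Embedding.induce A).toHom).support, z ∈ A := by
    simp only [Walk.support_map, List.mem_map]
    rintro _ ⟨z, -, rfl⟩
    exact z.2
  exact ⟨_, hq⟩

lemma Walk.reachable_deleteEdges_or {w x : α} (p : G.Walk w x) (y : α) :
    (G.deleteEdges {s(x, y)}).Reachable w x ∨ (G.deleteEdges {s(x, y)}).Reachable w y := by
  induction p with
  | nil => exact .inl .rfl
  | @cons w b x h q ih =>
    by_cases he : s(w, b) = s(x, y)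
    · rcases Sym2.eq_iff.mp he with ⟨rfl, -⟩ | ⟨rfl, -⟩
      · exact .inl .rfl
      · exact .inr .rfl
    · have hadj : (G.deleteEdges {s(x, y)}).Adj w b := (deleteEdges_adj ..).mpr ⟨h, he⟩
      exact ih.imp hadj.reachable.trans hadj.reachable.trans

lemma Connected.reachable_deleteEdges_or (hG : G.Connected) (x y w : α) :
    (G.deleteEdges {s(x, y)}).Reachable w x ∨ (G.deleteEdges {s(x, y)}).Reachable w y := by
  obtain ⟨p⟩ := hG.preconnected w x
  exact p.reachable_deleteEdges_or y

lemma IsBridge.mem_support_of_reachable_deleteEdges {x y a b : α} (h : G.IsBridge s(x, y))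
    (p : G.Walk a b) (ha : (G.deleteEdges {s(x, y)}).Reachable a x)
    (hb : (G.deleteEdges {s(x, y)}).Reachable b y) : x ∈ p.support ∧ y ∈ p.support := by
  have he : s(x, y) ∈ p.edges := p.mem_edges_of_not_reachable_deleteEdges fun hab =>
    isBridge_iff.mp h (ha.symm.trans (hab.trans hb))
  exact ⟨p.fst_mem_support_of_mem_edges he, p.snd_mem_support_of_mem_edges he⟩

lemma Walk.IsPath.exists_adj_boundary {a b : α} {p : G.Walk a b} (hp : p.IsPath) {P : α → Prop}
    (ha : P a) (hb : ¬P b) :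
    ∃ s t, G.Adj s t ∧ P s ∧ ¬P t ∧ (G.deleteEdges {s(s, t)}).Reachable t b := by
  induction p with
  | nil => exact absurd ha hb
  | @cons a x b h q ih =>
    rw [Walk.cons_isPath_iff] at hp
    by_cases hx : P x
    · exact ih hp.1 hx hb
    · have hq : s(a, x) ∉ q.edges := fun he => hp.2 (q.fst_mem_support_of_mem_edges he)
      exact ⟨a, x, h, ha, hx, ⟨q.toDeleteEdge _ hq⟩⟩

end SimpleGraph

lemma InternallyDisjointPaths.le_card_of_isSeparation {α : Type} {G : SimpleGraph α} {u v : α}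
    {k : ℕ} (h : InternallyDisjointPaths G u v k) {A B : Set α} (hAB : G.IsSeparation A B)
    (huB : u ∉ B) (hvA : v ∉ A) (hvB : v ∈ B) {S : Finset α} (hS : A ∩ B ⊆ S) : k ≤ S.card := by
  obtain ⟨P, -, -, hdisj⟩ := h
  choose y hyP hyA hyB using fun i => hAB.exists_mem_support_inter (P i) huB hvB
  have hy : Function.Injective y := by
    intro i j hij
    by_contra hne
    rcases hdisj i j hne (y i) (hyP i) (hij ▸ hyP j) with h | h
    · exact huB (h ▸ hyB i)
    · exact hvA (h ▸ hyA i)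
  simpa using Finset.card_le_card_of_injOn (s := .univ) y (fun i _ => hS ⟨hyA i, hyB i⟩) hy.injOn

def bagsOfSide {α β : Type*} (T : SimpleGraph β) (bag : β → Finset α) (e : Sym2 β) (s : β) :
    Set α :=
  {x | ∃ w, (T.deleteEdges {e}).Reachable w s ∧ x ∈ bag w}

namespace IsTreeDecomp

variable {α β : Type} {G : SimpleGraph α} {T : SimpleGraph β} {bag : β → Finset α}

lemma isSeparation_bagsOfSide (hTD : IsTreeDecomp G T bag) (s t : β) :
    G.IsSeparation (bagsOfSide T bag s(s, t) s) (bagsOfSide T bag s(s, t) t) := by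
  intro x y hxy
  obtain ⟨w, hx, hy⟩ := hTD.2.1 x y hxy
  rcases hTD.1.connected.reachable_deleteEdges_or s t w with h | h
  · exact .inl ⟨⟨w, h, hx⟩, ⟨w, h, hy⟩⟩
  · exact .inr ⟨⟨w, h, hx⟩, ⟨w, h, hy⟩⟩

lemma bagsOfSide_inter_subset (hTD : IsTreeDecomp G T bag) {s t : β}
    (hst : T.IsBridge s(s, t)) :
    bagsOfSide T bag s(s, t) s ∩ bagsOfSide T bag s(s, t) t ⊆ ↑(bag s) ∩ ↑(bag t) := by
  rintro x ⟨⟨w, hws, hxw⟩, ⟨w', hw't, hxw'⟩⟩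
  obtain ⟨p, hp⟩ := exists_walk_support_subset_of_connected_induce (hTD.2.2 x)
    (show w ∈ {t | x ∈ bag t} from hxw) (show w' ∈ {t | x ∈ bag t} from hxw')
  obtain ⟨hs, ht⟩ := hst.mem_support_of_reachable_deleteEdges p hws hw't
  exact ⟨hp s hs, hp t ht⟩

end IsTreeDecomp

theorem highFlow_common_bag_general {W : Type} (G : SimpleGraph V) (k : ℕ)
    (T : SimpleGraph W) (bag : W → Finset V)
    (hTD : IsTreeDecomp G T bag)
    (hadh : ∀ a b : W, T.Adj a b → (bag a ∩ bag b).card < k)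
    (u v : V) (hflow : InternallyDisjointPaths G u v k) :
    ∃ t : W, u ∈ bag t ∧ v ∈ bag t := by
  by_contra! hno
  obtain ⟨⟨tu, hu⟩⟩ := (hTD.2.2 u).nonempty
  obtain ⟨⟨tv, hv⟩⟩ := (hTD.2.2 v).nonempty
  obtain ⟨p, hp⟩ := hTD.1.connected.exists_isPath tu tv
  obtain ⟨s, t, hst, hus, hut, htv⟩ :=
    hp.exists_adj_boundary (P := (u ∈ bag ·)) hu fun h => hno tv h hv
  set A := bagsOfSide T bag s(s, t) s
  set B := bagsOfSide T bag s(s, t) t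
  have hAB : A ∩ B ⊆ ↑(bag s) ∩ ↑(bag t) :=
    hTD.bagsOfSide_inter_subset (isAcyclic_iff_forall_adj_isBridge.mp hTD.1.isAcyclic hst)
  have huB : u ∉ B := fun h => hut (hAB ⟨⟨s, .rfl, hus⟩, h⟩).2
  have hvB : v ∈ B := ⟨tv, htv.symm, hv⟩
  have hvA : v ∉ A := fun h => hno s hus (hAB ⟨h, hvB⟩).1
  refine (hadh s t hst).not_ge (hflow.le_card_of_isSeparation
    (hTD.isSeparation_bagsOfSide s t) huB hvA hvB ?_)
  rwa [Finset.coe_inter]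

/-- If `(T, bag)` is a tree decomposition of `G` whose every adhesion has size `< k`, and
`u ≠ v` are vertices with `flow*_G(u, v) ≥ k`, then some bag contains both `u` and `v`. -/
theorem highFlow_common_bag {W : Type} [Fintype W] (G : SimpleGraph V) (k : ℕ)
    (hk : 1 ≤ k) (T : SimpleGraph W) (bag : W → Finset V)
    (hTD : IsTreeDecomp G T bag)
    (hadh : ∀ a b : W, T.Adj a b → (bag a ∩ bag b).card < k)
    (u v : V) (huv : u ≠ v) (hflow : InternallyDisjointPaths G u v k) :
    ∃ t : W, u ∈ bag t ∧ v ∈ bag t :=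
  highFlow_common_bag_general G k T bag hTD hadh u v hflow
end

section
/- Let G be a finite graph, k ≥ 1, and let W ⊆ V(G) be a clique in the k-improved graph I_k(G). Then for every vertex cut (A,B) of G of order |A ∩ B| < k, either W ⊆ A or W ⊆ B. -/
open Finset SimpleGraph

variable {V : Type} [Fintype V] [DecidableEq V]

/-- `(A, B)` is a vertex cut of `G`. -/
def IsVertexCut (G : SimpleGraph V) (A B : Finset V) : Prop :=
  A ∪ B = Finset.univ ∧
  ∀ u v : V, u ∈ A → u ∉ B → v ∈ B → v ∉ A → ¬ G.Adj u v

/-- `W` is a clique in the `k`-improved graph `I_k(G)`: any two distinct vertices of `W` are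
adjacent in `G` or joined by `k` internally vertex-disjoint paths in `G`. -/
def IsImprovedClique (G : SimpleGraph V) (k : ℕ) (W : Finset V) : Prop :=
  ∀ u ∈ W, ∀ v ∈ W, u ≠ v → G.Adj u v ∨ InternallyDisjointPaths G u v k

lemma walk_crosses (G : SimpleGraph V) (A B : Finset V) (hcut : IsVertexCut G A B) :
    ∀ {u v : V} (p : G.Walk u v), u ∉ A → v ∉ B →
      ∃ w ∈ p.support, w ∈ A ∧ w ∈ B := by
  intro u v p
  induction p with
  | nil =>
    intro hu hv
    exact absurd ((Finset.mem_union.1 (by rw [hcut.1]; exact Finset.mem_univ _)).resolve_left hu) hv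
  | cons h q ih =>
    rename_i a b c
    intro hu hv
    have haB : a ∈ B := (Finset.mem_union.1 (by rw [hcut.1]; exact Finset.mem_univ a)).resolve_left hu
    by_cases hbA : b ∈ A
    · by_cases hbB : b ∈ B
      · exact ⟨b, by simp, hbA, hbB⟩
      · exact absurd h.symm (hcut.2 b a hbA hbB haB hu)
    · obtain ⟨w, hw, hwA, hwB⟩ := ih hbA hv
      exact ⟨w, by simp [hw], hwA, hwB⟩

/-- If `W` is a clique in the `k`-improved graph `I_k(G)`, then for every vertex cut `(A, B)`
of `G` of order `< k`, either `W ⊆ A` or `W ⊆ B`. -/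
theorem improvedClique_cut (G : SimpleGraph V) (k : ℕ) (hk : 1 ≤ k)
    (W : Finset V) (hW : IsImprovedClique G k W)
    (A B : Finset V) (hcut : IsVertexCut G A B) (hord : (A ∩ B).card < k) :
    W ⊆ A ∨ W ⊆ B := by
  by_contra hcon
  push_neg at hcon
  obtain ⟨⟨u, huW, huA⟩, v, hvW, hvB⟩ :
      (∃ u ∈ W, u ∉ A) ∧ ∃ v ∈ W, v ∉ B := by
    obtain ⟨h1, h2⟩ := hcon
    exact ⟨by simpa [Finset.subset_iff, not_forall] using h1,
           by simpa [Finset.subset_iff, not_forall] using h2⟩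
  have huB : u ∈ B := (Finset.mem_union.1 (by rw [hcut.1]; exact Finset.mem_univ u)).resolve_left huA
  have hvA : v ∈ A := (Finset.mem_union.1 (by rw [hcut.1]; exact Finset.mem_univ v)).resolve_right hvB
  have huv : u ≠ v := fun h => huA (h ▸ hvA)
  rcases hW u huW v hvW huv with hadj | ⟨P, _, _, hdisj⟩
  · exact hcut.2 v u hvA hvB huB huA hadj.symm
  · choose w hwsupp hwA hwB using fun i => walk_crosses G A B hcut (P i) huA hvB
    have hinj : Function.Injective (fun i => (⟨w i, Finset.mem_inter.2 ⟨hwA i, hwB i⟩⟩ :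
        (A ∩ B : Finset V))) := by
      intro i j hij
      by_contra hne
      have hw : w i = w j := congrArg Subtype.val hij
      rcases hdisj i j hne (w i) (hwsupp i) (hw ▸ hwsupp j) with h | h
      · exact huA (h ▸ hwA i)
      · exact hvB (h ▸ hwB i)
    have := Fintype.card_le_of_injective _ hinj
    rw [Fintype.card_fin, Fintype.card_coe] at this
    omega
end

section
/- Let G be a hypergraph. A set A ⊆ E(G) is well-linked if and only if for all (not necessarily disjoint) B1, B2 ⊆ A with B1 ∪ B2 = A, it holds that λ(B1) ≥ λ(A) or λ(B2) ≥ λ(A). -/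
open Finset

variable {V E : Type} [Fintype V] [DecidableEq V] [Fintype E] [DecidableEq E]

/-- `V(A)`: the union of the vertex sets of the hyperedges in `A`. -/
def hVerts (inc : E → Finset V) (A : Finset E) : Finset V :=
  A.biUnion inc

/-- The border `bd(A) = V(A) ∩ V(Ā)` of a set of hyperedges. -/
def hBd (inc : E → Finset V) (A : Finset E) : Finset V :=
  hVerts inc A ∩ hVerts inc Aᶜ

/-- The order function `λ(A) = |bd(A)|`. -/
def hLam (inc : E → Finset V) (A : Finset E) : ℕ :=
  (hBd inc A).card

/-- `A` is well-linked: for every bipartition `(B1, B2)` of `A`, `λ(B1) ≥ λ(A)` or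
`λ(B2) ≥ λ(A)`. -/
def WellLinked (inc : E → Finset V) (A : Finset E) : Prop :=
  ∀ B1 B2 : Finset E, Disjoint B1 B2 → B1 ∪ B2 = A →
    hLam inc A ≤ hLam inc B1 ∨ hLam inc A ≤ hLam inc B2

lemma mem_hBd {inc : E → Finset V} {A : Finset E} {v : V} :
    v ∈ hBd inc A ↔ (∃ e ∈ A, v ∈ inc e) ∧ ∃ e, e ∉ A ∧ v ∈ inc e := by
  simp [hBd, hVerts, mem_inter, mem_biUnion, mem_compl]

lemma hLam_posimodular (inc : E → Finset V) (X Y : Finset E) :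
    hLam inc (X \ Y) + hLam inc (Y \ X) ≤ hLam inc X + hLam inc Y := by
  have key : ∀ Z W : Finset E, hBd inc (Z \ W) ⊆ hBd inc Z ∪ hBd inc W := by
    intro Z W v hv
    rw [mem_hBd] at hv
    obtain ⟨⟨e, he, hve⟩, f, hf, hvf⟩ := hv
    simp only [mem_sdiff] at he
    by_cases hfZ : f ∈ Z
    · have hfW : f ∈ W := by by_contra h; exact hf (mem_sdiff.mpr ⟨hfZ, h⟩)
      exact mem_union_right _ (mem_hBd.mpr ⟨⟨f, hfW, hvf⟩, e, he.2, hve⟩)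
    · exact mem_union_left _ (mem_hBd.mpr ⟨⟨e, he.1, hve⟩, f, hfZ, hvf⟩)
  have key2 : hBd inc (X \ Y) ∩ hBd inc (Y \ X) ⊆ hBd inc X ∩ hBd inc Y := by
    intro v hv
    rw [mem_inter, mem_hBd, mem_hBd] at hv
    obtain ⟨⟨⟨e, he, hve⟩, -⟩, ⟨f, hf, hvf⟩, -⟩ := hv
    simp only [mem_sdiff] at he hf
    exact mem_inter.mpr ⟨mem_hBd.mpr ⟨⟨e, he.1, hve⟩, f, hf.2, hvf⟩,
      mem_hBd.mpr ⟨⟨f, hf.1, hvf⟩, e, he.2, hve⟩⟩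
  have hU : hBd inc (X \ Y) ∪ hBd inc (Y \ X) ⊆ hBd inc X ∪ hBd inc Y :=
    union_subset (key X Y) ((key Y X).trans (by rw [union_comm]))
  calc hLam inc (X \ Y) + hLam inc (Y \ X)
      = (hBd inc (X \ Y) ∪ hBd inc (Y \ X)).card
        + (hBd inc (X \ Y) ∩ hBd inc (Y \ X)).card :=
        (card_union_add_card_inter _ _).symm
    _ ≤ (hBd inc X ∪ hBd inc Y).card + (hBd inc X ∩ hBd inc Y).card :=
        Nat.add_le_add (card_le_card hU) (card_le_card key2)
    _ = hLam inc X + hLam inc Y := card_union_add_card_inter _ _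

/-- A set `A ⊆ E(G)` is well-linked if and only if for all (not necessarily disjoint)
`B1, B2 ⊆ A` with `B1 ∪ B2 = A`, it holds that `λ(B1) ≥ λ(A)` or `λ(B2) ≥ λ(A)`. -/
theorem wellLinked_iff_covers (inc : E → Finset V)
    (hcov : ∀ v : V, ∃ e : E, v ∈ inc e) (A : Finset E) :
    WellLinked inc A ↔
      ∀ B1 B2 : Finset E, B1 ⊆ A → B2 ⊆ A → B1 ∪ B2 = A →
        hLam inc A ≤ hLam inc B1 ∨ hLam inc A ≤ hLam inc B2 := by
  constructor
  · intro hW B1 B2 hB1 hB2 hUnion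
    by_contra hcon
    push_neg at hcon
    obtain ⟨h1, h2⟩ := hcon
    have hd2 := hW (A \ B2) B2 sdiff_disjoint (sdiff_union_of_subset hB2)
    have hd1 := hW (A \ B1) B1 sdiff_disjoint (sdiff_union_of_subset hB1)
    have e2 : A \ B2 = B1 \ B2 := by
      apply le_antisymm
      · intro e he; simp only [mem_sdiff] at he ⊢
        refine ⟨?_, he.2⟩
        have := he.1; rw [← hUnion, mem_union] at this
        tauto
      · exact sdiff_le_sdiff (hUnion ▸ subset_union_left) le_rfl
    have e1 : A \ B1 = B2 \ B1 := by
      apply le_antisymm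
      · intro e he; simp only [mem_sdiff] at he ⊢
        refine ⟨?_, he.2⟩
        have := he.1; rw [← hUnion, mem_union] at this
        tauto
      · exact sdiff_le_sdiff (hUnion ▸ subset_union_right) le_rfl
    have hp := hLam_posimodular inc B1 B2
    rw [← e2, ← e1] at hp
    omega
  · intro h B1 B2 _ hU
    exact h B1 B2 (hU ▸ subset_union_left) (hU ▸ subset_union_right) hU
end

section
/- Transitivity of well-linkedness: let G be a hypergraph, let A ⊊ E(G) be well-linked in G, and let B ⊆ E(G ◁ A) be well-linked in G ◁ A. Then B ▷ A is well-linked in G. -/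
open Finset

variable {V E : Type} [Fintype V] [DecidableEq V] [Fintype E] [DecidableEq E]

/-- The incidence map of the hypergraph `G ◁ A`: its hyperedges are the hyperedges of `G`
not in `A`, together with one new hyperedge `e_A` (encoded as `none`) with vertex set
`bd(A)`. -/
def quotInc (inc : E → Finset V) (A : Finset E) :
    Option {e : E // e ∉ A} → Finset V
  | none => hBd inc A
  | some e => inc e.val

/-- `B ▷ A`: the set of hyperedges of `G` corresponding to a set `B` of hyperedges of
`G ◁ A`; the new hyperedge `e_A` (i.e. `none`), if present, is replaced by `A`. -/
def hPush (A : Finset E) (B : Finset (Option {e : E // e ∉ A})) : Finset E :=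
  B.biUnion fun x => x.elim A fun e => {e.val}

set_option linter.unusedSectionVars false
set_option linter.unusedVariables false
/-! ### Auxiliary lemmas -/

lemma mem_hVerts {inc : E → Finset V} {S : Finset E} {v : V} :
    v ∈ hVerts inc S ↔ ∃ e ∈ S, v ∈ inc e := by
  simp [hVerts]

lemma hVerts_mono (inc : E → Finset V) {S T : Finset E} (h : S ⊆ T) :
    hVerts inc S ⊆ hVerts inc T := by
  intro v hv
  rw [mem_hVerts] at hv ⊢
  obtain ⟨e, he, hve⟩ := hv
  exact ⟨e, h he, hve⟩

lemma hVerts_union (inc : E → Finset V) (S T : Finset E) :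
    hVerts inc (S ∪ T) = hVerts inc S ∪ hVerts inc T := by
  ext v
  simp only [mem_hVerts, mem_union]
  constructor
  · rintro ⟨e, he | he, hv⟩
    exacts [Or.inl ⟨e, he, hv⟩, Or.inr ⟨e, he, hv⟩]
  · rintro (⟨e, he, hv⟩ | ⟨e, he, hv⟩)
    exacts [⟨e, Or.inl he, hv⟩, ⟨e, Or.inr he, hv⟩]

lemma hBd_compl (inc : E → Finset V) (S : Finset E) : hBd inc Sᶜ = hBd inc S := by
  unfold hBd
  rw [compl_compl, inter_comm]

lemma hLam_compl (inc : E → Finset V) (S : Finset E) : hLam inc Sᶜ = hLam inc S := by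
  unfold hLam
  rw [hBd_compl]

lemma hLam_submod (inc : E → Finset V) (S T : Finset E) :
    hLam inc (S ∪ T) + hLam inc (S ∩ T) ≤ hLam inc S + hLam inc T := by
  have key1 : hBd inc (S ∪ T) ∪ hBd inc (S ∩ T) ⊆ hBd inc S ∪ hBd inc T := by
    intro v hv
    rcases mem_union.1 hv with h | h
    · obtain ⟨hu, hc⟩ := mem_inter.1 h
      have hc' : v ∈ hVerts inc (Sᶜ ∩ Tᶜ) := by rwa [← compl_union]
      have hcS : v ∈ hVerts inc Sᶜ := hVerts_mono inc inter_subset_left hc'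
      have hcT : v ∈ hVerts inc Tᶜ := hVerts_mono inc inter_subset_right hc'
      rw [hVerts_union] at hu
      rcases mem_union.1 hu with h' | h'
      · exact mem_union_left _ (mem_inter.2 ⟨h', hcS⟩)
      · exact mem_union_right _ (mem_inter.2 ⟨h', hcT⟩)
    · obtain ⟨hu, hc⟩ := mem_inter.1 h
      have huS : v ∈ hVerts inc S := hVerts_mono inc inter_subset_left hu
      have huT : v ∈ hVerts inc T := hVerts_mono inc inter_subset_right hu
      have hc' : v ∈ hVerts inc (Sᶜ ∪ Tᶜ) := by rwa [← compl_inter]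
      rw [hVerts_union] at hc'
      rcases mem_union.1 hc' with h' | h'
      · exact mem_union_left _ (mem_inter.2 ⟨huS, h'⟩)
      · exact mem_union_right _ (mem_inter.2 ⟨huT, h'⟩)
  have key2 : hBd inc (S ∪ T) ∩ hBd inc (S ∩ T) ⊆ hBd inc S ∩ hBd inc T := by
    intro v hv
    obtain ⟨h1, h2⟩ := mem_inter.1 hv
    obtain ⟨hu1, hc1⟩ := mem_inter.1 h1
    obtain ⟨hu2, hc2⟩ := mem_inter.1 h2
    have huS : v ∈ hVerts inc S := hVerts_mono inc inter_subset_left hu2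
    have huT : v ∈ hVerts inc T := hVerts_mono inc inter_subset_right hu2
    have hc' : v ∈ hVerts inc (Sᶜ ∩ Tᶜ) := by rwa [← compl_union]
    exact mem_inter.2 ⟨mem_inter.2 ⟨huS, hVerts_mono inc inter_subset_left hc'⟩,
      mem_inter.2 ⟨huT, hVerts_mono inc inter_subset_right hc'⟩⟩
  calc hLam inc (S ∪ T) + hLam inc (S ∩ T)
      = (hBd inc (S ∪ T) ∪ hBd inc (S ∩ T)).card
        + (hBd inc (S ∪ T) ∩ hBd inc (S ∩ T)).card :=
        (card_union_add_card_inter _ _).symm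
    _ ≤ (hBd inc S ∪ hBd inc T).card + (hBd inc S ∩ hBd inc T).card :=
        Nat.add_le_add (card_le_card key1) (card_le_card key2)
    _ = hLam inc S + hLam inc T := card_union_add_card_inter _ _

lemma hLam_posi (inc : E → Finset V) (S T : Finset E) :
    hLam inc (S \ T) + hLam inc (T \ S) ≤ hLam inc S + hLam inc T := by
  have h := hLam_submod inc S Tᶜ
  have e1 : S ∩ Tᶜ = S \ T := (sdiff_eq).symm
  have e2 : hLam inc (S ∪ Tᶜ) = hLam inc (T \ S) := by
    rw [← hLam_compl inc (S ∪ Tᶜ)]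
    congr 1
    ext x
    simp only [mem_compl, mem_union, mem_sdiff, not_or, not_not]
    tauto
  rw [e1, e2, hLam_compl] at h
  omega

lemma mem_hPush {A : Finset E} {B : Finset (Option {e : E // e ∉ A})} {x : E} :
    x ∈ hPush A B ↔ (none ∈ B ∧ x ∈ A) ∨ ∃ h : x ∉ A, some ⟨x, h⟩ ∈ B := by
  simp only [hPush, mem_biUnion]
  constructor
  · rintro ⟨y, hy, hx⟩
    match y with
    | none => exact Or.inl ⟨hy, hx⟩
    | some e =>
      have hxe : x = e.val := by simpa using hx
      subst hxe
      exact Or.inr ⟨e.property, hy⟩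
  · rintro (⟨hn, hx⟩ | ⟨h, hs⟩)
    · exact ⟨none, hn, hx⟩
    · exact ⟨some ⟨x, h⟩, hs, by simp⟩

lemma hA_subset_hPush {A : Finset E} {B : Finset (Option {e : E // e ∉ A})}
    (hn : none ∈ B) : A ⊆ hPush A B := by
  intro x hx
  exact mem_hPush.2 (Or.inl ⟨hn, hx⟩)

lemma hPush_subset_compl {A : Finset E} {B : Finset (Option {e : E // e ∉ A})}
    (hn : none ∉ B) : hPush A B ⊆ Aᶜ := by
  intro x hx
  rcases mem_hPush.1 hx with ⟨h, _⟩ | ⟨h, _⟩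
  · exact absurd h hn
  · exact mem_compl.2 h

lemma hPush_compl {A : Finset E} (B : Finset (Option {e : E // e ∉ A})) :
    hPush A Bᶜ = (hPush A B)ᶜ := by
  ext x
  rw [mem_compl, mem_hPush, mem_hPush]
  by_cases hx : x ∈ A
  · constructor
    · rintro (⟨hn, -⟩ | ⟨h, -⟩)
      · rintro (⟨hn', -⟩ | ⟨h', -⟩)
        · exact (mem_compl.1 hn) hn'
        · exact h' hx
      · exact absurd hx h
    · intro h
      refine Or.inl ⟨mem_compl.2 fun hn => h (Or.inl ⟨hn, hx⟩), hx⟩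
  · constructor
    · rintro (⟨-, hxa⟩ | ⟨h, hs⟩)
      · exact absurd hxa hx
      · rintro (⟨-, hxa⟩ | ⟨h', hs'⟩)
        · exact hx hxa
        · exact (mem_compl.1 hs) hs'
    · intro h
      exact Or.inr ⟨hx, mem_compl.2 fun hs => h (Or.inr ⟨hx, hs⟩)⟩

lemma hVerts_quot_of_mem (inc : E → Finset V) {A : Finset E}
    {D : Finset (Option {e : E // e ∉ A})} (hn : none ∈ D) :
    hVerts (quotInc inc A) D = hBd inc A ∪ hVerts inc (hPush A D \ A) := by
  ext v
  simp only [mem_hVerts, mem_union, mem_sdiff]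
  constructor
  · rintro ⟨x, hx, hv⟩
    match x with
    | none => exact Or.inl hv
    | some e =>
      exact Or.inr ⟨e.val, ⟨mem_hPush.2 (Or.inr ⟨e.property, hx⟩), e.property⟩, hv⟩
  · rintro (hv | ⟨x, ⟨hx, hxA⟩, hv⟩)
    · exact ⟨none, hn, hv⟩
    · rcases mem_hPush.1 hx with ⟨-, hA⟩ | ⟨h, hs⟩
      · exact absurd hA hxA
      · exact ⟨some ⟨x, h⟩, hs, hv⟩

lemma hVerts_quot_of_not_mem (inc : E → Finset V) {A : Finset E}
    {D : Finset (Option {e : E // e ∉ A})} (hn : none ∉ D) :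
    hVerts (quotInc inc A) D = hVerts inc (hPush A D) := by
  ext v
  simp only [mem_hVerts]
  constructor
  · rintro ⟨x, hx, hv⟩
    match x with
    | none => exact absurd hx hn
    | some e => exact ⟨e.val, mem_hPush.2 (Or.inr ⟨e.property, hx⟩), hv⟩
  · rintro ⟨x, hx, hv⟩
    rcases mem_hPush.1 hx with ⟨hnB, -⟩ | ⟨h, hs⟩
    · exact absurd hnB hn
    · exact ⟨some ⟨x, h⟩, hs, hv⟩

lemma hBd_quot (inc : E → Finset V) (A : Finset E)
    (D : Finset (Option {e : E // e ∉ A})) :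
    hBd (quotInc inc A) D = hBd inc (hPush A D) := by
  by_cases hn : none ∈ D
  · have hnc : none ∉ Dᶜ := by simp [hn]
    have hAC : A ⊆ hPush A D := hA_subset_hPush hn
    unfold hBd
    rw [hVerts_quot_of_mem inc hn, hVerts_quot_of_not_mem inc hnc, hPush_compl]
    ext v
    simp only [mem_inter, mem_union]
    constructor
    · rintro ⟨h1, h2⟩
      refine ⟨?_, h2⟩
      rcases h1 with hb | hv
      · exact hVerts_mono inc hAC (mem_inter.1 hb).1
      · exact hVerts_mono inc sdiff_subset hv
    · rintro ⟨h1, h2⟩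
      refine ⟨?_, h2⟩
      have hv' : v ∈ hVerts inc (A ∪ (hPush A D \ A)) := by
        rwa [union_sdiff_of_subset hAC]
      rw [hVerts_union] at hv'
      rcases mem_union.1 hv' with h | h
      · exact Or.inl (mem_inter.2 ⟨h, hVerts_mono inc (compl_subset_compl.2 hAC) h2⟩)
      · exact Or.inr h
  · have hnc : none ∈ Dᶜ := mem_compl.2 hn
    have hCA : hPush A D ⊆ Aᶜ := hPush_subset_compl hn
    have hACc : A ⊆ (hPush A D)ᶜ := by
      intro a ha
      exact mem_compl.2 fun hc => (mem_compl.1 (hCA hc)) ha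
    unfold hBd
    rw [hVerts_quot_of_not_mem inc hn, hVerts_quot_of_mem inc hnc, hPush_compl]
    ext v
    simp only [mem_inter, mem_union]
    constructor
    · rintro ⟨h1, h2⟩
      refine ⟨h1, ?_⟩
      rcases h2 with hb | hv
      · exact hVerts_mono inc hACc (mem_inter.1 hb).1
      · exact hVerts_mono inc sdiff_subset hv
    · rintro ⟨h1, h2⟩
      refine ⟨h1, ?_⟩
      have hv' : v ∈ hVerts inc (A ∪ ((hPush A D)ᶜ \ A)) := by
        rwa [union_sdiff_of_subset hACc]
      rw [hVerts_union] at hv'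
      rcases mem_union.1 hv' with h | h
      · exact Or.inl (mem_inter.2 ⟨h, hVerts_mono inc hCA h1⟩)
      · exact Or.inr h

lemma hLam_quot (inc : E → Finset V) (A : Finset E)
    (D : Finset (Option {e : E // e ∉ A})) :
    hLam (quotInc inc A) D = hLam inc (hPush A D) := by
  unfold hLam
  rw [hBd_quot]

/-! ### Lifting sets of edges to the quotient -/

instance instDecElimMem (A C : Finset E) :
    ∀ x : Option {e : E // e ∉ A}, Decidable (x.elim False fun e => e.val ∈ C)
  | none => isFalse id
  | some e => inferInstanceAs (Decidable (e.val ∈ C))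

/-- The set of hyperedges of `G ◁ A` corresponding to the elements of `C` not in `A`. -/
def liftSet (A C : Finset E) : Finset (Option {e : E // e ∉ A}) :=
  Finset.univ.filter fun x => x.elim False fun e => e.val ∈ C

lemma mem_liftSet_some {A C : Finset E} {e : {e : E // e ∉ A}} :
    some e ∈ liftSet A C ↔ e.val ∈ C := by
  simp [liftSet]

lemma none_not_mem_liftSet {A C : Finset E} : none ∉ liftSet A C := by
  simp [liftSet]

lemma hPush_liftSet (A C : Finset E) : hPush A (liftSet A C) = C \ A := by
  ext x
  rw [mem_hPush, mem_sdiff]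
  constructor
  · rintro (⟨hn, -⟩ | ⟨h, hs⟩)
    · exact absurd hn none_not_mem_liftSet
    · exact ⟨mem_liftSet_some.1 hs, h⟩
  · rintro ⟨hC, hA⟩
    exact Or.inr ⟨hA, mem_liftSet_some.2 hC⟩

lemma liftSet_union (A C1 C2 : Finset E) :
    liftSet A (C1 ∪ C2) = liftSet A C1 ∪ liftSet A C2 := by
  ext x
  match x with
  | none => simp [none_not_mem_liftSet]
  | some e => simp [mem_liftSet_some]

lemma eq_insert_liftSet {A : Finset E} {B : Finset (Option {e : E // e ∉ A})}
    (hn : none ∈ B) : insert none (liftSet A (hPush A B)) = B := by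
  ext x
  match x with
  | none => simp [hn]
  | some e =>
    simp only [mem_insert, reduceCtorEq, false_or, mem_liftSet_some, mem_hPush]
    constructor
    · rintro (⟨-, hA⟩ | ⟨h, hs⟩)
      · exact absurd hA e.property
      · exact hs
    · intro h
      exact Or.inr ⟨e.property, h⟩

lemma eq_liftSet {A : Finset E} {B : Finset (Option {e : E // e ∉ A})}
    (hn : none ∉ B) : liftSet A (hPush A B) = B := by
  ext x
  match x with
  | none => simp [none_not_mem_liftSet, hn]
  | some e =>
    simp only [mem_liftSet_some, mem_hPush]
    constructor
    · rintro (⟨hnB, -⟩ | ⟨h, hs⟩)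
      · exact absurd hnB hn
      · exact hs
    · intro h
      exact Or.inr ⟨e.property, h⟩

lemma hPush_insert_none (A : Finset E) (S : Finset (Option {e : E // e ∉ A})) :
    hPush A (insert none S) = A ∪ hPush A S := by
  ext x
  simp only [mem_hPush, mem_insert, mem_union, reduceCtorEq, true_or, false_or, true_and]
  constructor
  · rintro (hx | ⟨h, hs⟩)
    · exact Or.inl hx
    · exact Or.inr (Or.inr ⟨h, hs⟩)
  · rintro (hx | (⟨hn, hx⟩ | ⟨h, hs⟩))
    · exact Or.inl hx
    · exact Or.inl hx
    · exact Or.inr ⟨h, hs⟩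

/-- Main auxiliary step: the case `none ∈ B`, with the border of `C1 ∩ A` large. -/
lemma wl_aux (inc : E → Finset V) (A : Finset E) (B : Finset (Option {e : E // e ∉ A}))
    (hwlB : WellLinked (quotInc inc A) B) (hn : none ∈ B)
    (C1 C2 : Finset E) (hd : Disjoint C1 C2) (hu : C1 ∪ C2 = hPush A B)
    (h1 : hLam inc A ≤ hLam inc (C1 ∩ A)) :
    hLam inc (hPush A B) ≤ hLam inc C1 ∨ hLam inc (hPush A B) ≤ hLam inc C2 := by
  have hApush : A ⊆ hPush A B := hA_subset_hPush hn
  have hdisj : Disjoint (insert none (liftSet A C1)) (liftSet A C2) := by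
    rw [Finset.disjoint_left]
    intro x hx1 hx2
    match x with
    | none => exact none_not_mem_liftSet hx2
    | some e =>
      have he1 : e.val ∈ C1 := by
        rcases mem_insert.1 hx1 with h | h
        · exact absurd h (by simp)
        · exact mem_liftSet_some.1 h
      exact (Finset.disjoint_left.1 hd he1) (mem_liftSet_some.1 hx2)
  have hun : insert none (liftSet A C1) ∪ liftSet A C2 = B := by
    rw [insert_union, ← liftSet_union, hu, eq_insert_liftSet hn]
  have key := hwlB _ _ hdisj hun
  rw [hLam_quot, hLam_quot, hLam_quot] at key
  have hp1 : hPush A (insert none (liftSet A C1)) = C1 ∪ A := by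
    rw [hPush_insert_none, hPush_liftSet, union_comm A (C1 \ A), sdiff_union_self_eq_union]
  have hp2 : hPush A (liftSet A C2) = C2 \ A := hPush_liftSet A C2
  rw [hp1, hp2] at key
  rcases key with h | h
  · left
    have hsub := hLam_submod inc C1 A
    omega
  · right
    have hpos := hLam_posi inc C2 A
    have hAC : A \ C2 = C1 ∩ A := by
      ext e
      simp only [mem_sdiff, mem_inter]
      constructor
      · rintro ⟨heA, heC2⟩
        have : e ∈ C1 ∪ C2 := hu ▸ hApush heA
        rcases mem_union.1 this with h' | h'
        exacts [⟨h', heA⟩, absurd h' heC2]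
      · rintro ⟨heC1, heA⟩
        exact ⟨heA, fun h' => Finset.disjoint_left.1 hd heC1 h'⟩
    rw [hAC] at hpos
    omega

/-- Transitivity of well-linkedness: if `A ⊊ E(G)` is well-linked in `G` and
`B ⊆ E(G ◁ A)` is well-linked in `G ◁ A`, then `B ▷ A` is well-linked in `G`. -/
theorem wellLinked_transitive (inc : E → Finset V)
    (hcov : ∀ v : V, ∃ e : E, v ∈ inc e)
    (A : Finset E) (hA : A ≠ Finset.univ) (hwlA : WellLinked inc A)
    (B : Finset (Option {e : E // e ∉ A}))
    (hwlB : WellLinked (quotInc inc A) B) :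
    WellLinked inc (hPush A B) := by
  intro C1 C2 hd hu
  by_cases hn : none ∈ B
  · have hApush : A ⊆ hPush A B := hA_subset_hPush hn
    have hAu : (C1 ∩ A) ∪ (C2 ∩ A) = A := by
      rw [← union_inter_distrib_right, hu, inter_eq_right.2 hApush]
    have hAd : Disjoint (C1 ∩ A) (C2 ∩ A) :=
      hd.mono inter_subset_left inter_subset_left
    rcases hwlA (C1 ∩ A) (C2 ∩ A) hAd hAu with h | h
    · exact wl_aux inc A B hwlB hn C1 C2 hd hu h
    · exact (wl_aux inc A B hwlB hn C2 C1 hd.symm (by rw [union_comm, hu]) h).symm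
  · have hC1 : Disjoint C1 A := by
      rw [Finset.disjoint_left]
      intro x hx hxA
      have : x ∈ Aᶜ := hPush_subset_compl hn (hu ▸ mem_union_left C2 hx)
      exact (mem_compl.1 this) hxA
    have hC2 : Disjoint C2 A := by
      rw [Finset.disjoint_left]
      intro x hx hxA
      have : x ∈ Aᶜ := hPush_subset_compl hn (hu ▸ mem_union_right C1 hx)
      exact (mem_compl.1 this) hxA
    have hd' : Disjoint (liftSet A C1) (liftSet A C2) := by
      rw [Finset.disjoint_left]
      intro x hx1 hx2
      match x with
      | none => exact none_not_mem_liftSet hx1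
      | some e =>
        exact (Finset.disjoint_left.1 hd (mem_liftSet_some.1 hx1))
          (mem_liftSet_some.1 hx2)
    have hu' : liftSet A C1 ∪ liftSet A C2 = B := by
      rw [← liftSet_union, hu, eq_liftSet hn]
    have key := hwlB _ _ hd' hu'
    rw [hLam_quot, hLam_quot, hLam_quot, hPush_liftSet, hPush_liftSet] at key
    rw [sdiff_eq_self_of_disjoint hC1, sdiff_eq_self_of_disjoint hC2] at key
    exact key
end

section
/- Let G be a hypergraph, let 𝒯1, 𝒯2 be tangles of G, and let (A,Ā) be a separation with A ∈ 𝒯1 and Ā ∈ 𝒯2. If there exists a bipartition (B1,B2) of A with λ(Bi) ≤ λ(A) for both i ∈ {1,2}, then either B1 ∈ 𝒯1 and E(G) \ B1 ∈ 𝒯2, or B2 ∈ 𝒯1 and E(G) \ B2 ∈ 𝒯2. -/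
open Finset

variable {V E : Type} [Fintype V] [DecidableEq V] [Fintype E] [DecidableEq E]

/-- `𝒯` is a tangle of order `k` of the hypergraph. -/
def IsTangle (inc : E → Finset V) (k : ℕ) (𝒯 : Set (Finset E)) : Prop :=
  (∀ A ∈ 𝒯, hLam inc A < k) ∧
  (∀ A : Finset E, hLam inc A < k → A ∈ 𝒯 ∨ Aᶜ ∈ 𝒯) ∧
  (∀ A ∈ 𝒯, ∀ B ∈ 𝒯, ∀ C ∈ 𝒯, A ∪ B ∪ C ≠ Finset.univ) ∧
  (∀ e : E, ({e}ᶜ : Finset E) ∉ 𝒯)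

/-- Let `𝒯1, 𝒯2` be tangles of the hypergraph, and `(A, Ā)` a separation with `A ∈ 𝒯1`
and `Ā ∈ 𝒯2`. If `(B1, B2)` is a bipartition of `A` with `λ(Bi) ≤ λ(A)` for both `i`,
then either `(B1, E(G) \ B1)` or `(B2, E(G) \ B2)` distinguishes `𝒯1` from `𝒯2`. -/
theorem tangle_distinguish_pushing (inc : E → Finset V)
    (hcov : ∀ v : V, ∃ e : E, v ∈ inc e)
    (k1 k2 : ℕ) (𝒯1 𝒯2 : Set (Finset E))
    (ht1 : IsTangle inc k1 𝒯1) (ht2 : IsTangle inc k2 𝒯2)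
    (A : Finset E) (hA1 : A ∈ 𝒯1) (hA2 : Aᶜ ∈ 𝒯2)
    (B1 B2 : Finset E) (hdisj : Disjoint B1 B2) (hunion : B1 ∪ B2 = A)
    (hb1 : hLam inc B1 ≤ hLam inc A) (hb2 : hLam inc B2 ≤ hLam inc A) :
    (B1 ∈ 𝒯1 ∧ B1ᶜ ∈ 𝒯2) ∨ (B2 ∈ 𝒯1 ∧ B2ᶜ ∈ 𝒯2) := by

  obtain ⟨hs1, he1, ha1, -⟩ := ht1
  obtain ⟨hs2, he2, ha2, -⟩ := ht2
  have hlamc : hLam inc Aᶜ = hLam inc A := by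
    unfold hLam hBd
    rw [compl_compl, inter_comm]
  have hk1 : hLam inc A < k1 := hs1 A hA1
  have hk2 : hLam inc A < k2 := by rw [← hlamc]; exact hs2 Aᶜ hA2
  have hB1A : B1 ⊆ A := hunion ▸ subset_union_left
  have hB2A : B2 ⊆ A := hunion ▸ subset_union_right
  have hmem1 : ∀ B : Finset E, B ⊆ A → hLam inc B ≤ hLam inc A → B ∈ 𝒯1 := by
    intro B hBA hlB
    rcases he1 B (lt_of_le_of_lt hlB hk1) with h | h
    · exact h
    · exfalso
      refine ha1 A hA1 Bᶜ h Bᶜ h ?_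
      apply eq_univ_of_forall
      intro x
      simp only [mem_union, mem_compl]
      by_cases hx : x ∈ B
      · exact Or.inl (Or.inl (hBA hx))
      · exact Or.inr hx
  have h1 : B1 ∈ 𝒯1 := hmem1 B1 hB1A hb1
  have h2 : B2 ∈ 𝒯1 := hmem1 B2 hB2A hb2
  rcases he2 B1 (lt_of_le_of_lt hb1 hk2) with hc1 | hc1
  · rcases he2 B2 (lt_of_le_of_lt hb2 hk2) with hc2 | hc2
    · exfalso
      refine ha2 Aᶜ hA2 B1 hc1 B2 hc2 ?_
      apply eq_univ_of_forall
      intro x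
      simp only [mem_union, mem_compl]
      by_cases hx : x ∈ A
      · rw [← hunion] at hx
        rcases mem_union.mp hx with h | h
        · exact Or.inl (Or.inr h)
        · exact Or.inr h
      · exact Or.inl (Or.inl hx)
    · exact Or.inr ⟨h2, hc2⟩
  · exact Or.inl ⟨h1, hc1⟩
end

section
/- Let (A,Ā) be a separation of a hypergraph G of order < k that distinguishes two tangles, and let (B,B̄) be a mixed-k-well-linked separation of G. Then there are orientations (A',Ā') of (A,Ā) and (B',B̄') of (B,B̄) such that the separation (A' ∪ B', Ā' ∩ B̄') distinguishes two tangles of G. -/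
open Finset

variable {V E : Type} [Fintype V] [DecidableEq V] [Fintype E] [DecidableEq E]

/-- `A` is `k`-well-linked. -/
def KWellLinked (inc : E → Finset V) (k : ℕ) (A : Finset E) : Prop :=
  ∀ B1 B2 : Finset E, Disjoint B1 B2 → B1 ∪ B2 = A →
    hLam inc A ≤ hLam inc B1 ∨ hLam inc A ≤ hLam inc B2 ∨
      (k ≤ hLam inc B1 ∧ k ≤ hLam inc B2)

/-- The separation `(B, B̄)` is mixed-`k`-well-linked: one side is well-linked and the
other is `k`-well-linked. -/
def MixedKWellLinked (inc : E → Finset V) (k : ℕ) (B : Finset E) : Prop :=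
  (WellLinked inc B ∧ KWellLinked inc k Bᶜ) ∨
  (WellLinked inc Bᶜ ∧ KWellLinked inc k B)

/-- The separation `(A, Ā)` distinguishes two tangles of the hypergraph. -/
def DistinguishesTwoTangles (inc : E → Finset V) (A : Finset E) : Prop :=
  ∃ (k1 k2 : ℕ) (𝒯1 𝒯2 : Set (Finset E)),
    IsTangle inc k1 𝒯1 ∧ IsTangle inc k2 𝒯2 ∧ A ∈ 𝒯1 ∧ Aᶜ ∈ 𝒯2

section UncrossAux

variable {V E : Type} [Fintype V] [DecidableEq V] [Fintype E] [DecidableEq E]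

set_option linter.unusedSectionVars false

lemma uncross_lam_compl (inc : E → Finset V) (X : Finset E) :
    hLam inc Xᶜ = hLam inc X := by
  unfold hLam hBd
  rw [compl_compl, inter_comm]

lemma uncross_lam_inter (inc : E → Finset V) (X Y : Finset E) :
    hLam inc (X ∩ Y) = hLam inc (Xᶜ ∪ Yᶜ) := by
  rw [← Finset.compl_inter, uncross_lam_compl]

lemma uncross_submod (inc : E → Finset V) (X Y : Finset E) :
    hLam inc (X ∪ Y) + hLam inc (X ∩ Y) ≤ hLam inc X + hLam inc Y := by
  have h1 : hBd inc (X ∪ Y) ∪ hBd inc (X ∩ Y) ⊆ hBd inc X ∪ hBd inc Y := by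
    intro v hv
    simp only [hBd, hVerts, mem_union, mem_inter, mem_biUnion, mem_compl,
      not_or, not_and] at hv ⊢
    rcases hv with ⟨⟨e1, he1, hv1⟩, ⟨e2, he2, hv2⟩⟩ | ⟨⟨e1, he1, hv1⟩, ⟨e2, he2, hv2⟩⟩
    · rcases he1 with h | h
      · exact Or.inl ⟨⟨e1, h, hv1⟩, ⟨e2, he2.1, hv2⟩⟩
      · exact Or.inr ⟨⟨e1, h, hv1⟩, ⟨e2, he2.2, hv2⟩⟩
    · by_cases h : e2 ∈ X
      · exact Or.inr ⟨⟨e1, he1.2, hv1⟩, ⟨e2, he2 h, hv2⟩⟩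
      · exact Or.inl ⟨⟨e1, he1.1, hv1⟩, ⟨e2, h, hv2⟩⟩
  have h2 : hBd inc (X ∪ Y) ∩ hBd inc (X ∩ Y) ⊆ hBd inc X ∩ hBd inc Y := by
    intro v hv
    simp only [hBd, hVerts, mem_union, mem_inter, mem_biUnion, mem_compl,
      not_or, not_and] at hv ⊢
    obtain ⟨⟨-, ⟨e2, he2, hv2⟩⟩, ⟨⟨e3, he3, hv3⟩, -⟩⟩ := hv
    exact ⟨⟨⟨e3, he3.1, hv3⟩, ⟨e2, he2.1, hv2⟩⟩, ⟨⟨e3, he3.2, hv3⟩, ⟨e2, he2.2, hv2⟩⟩⟩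
  have e1 := Finset.card_union_add_card_inter (hBd inc (X ∪ Y)) (hBd inc (X ∩ Y))
  have e2 := Finset.card_union_add_card_inter (hBd inc X) (hBd inc Y)
  have l1 := Finset.card_le_card h1
  have l2 := Finset.card_le_card h2
  unfold hLam
  omega

/-- Submodularity in "corner" form: all four sets written as unions. -/
lemma uncross_corner (inc : E → Finset V) (X Y : Finset E) :
    hLam inc (X ∪ Y) + hLam inc (Xᶜ ∪ Yᶜ) ≤ hLam inc X + hLam inc Y := by
  have := uncross_submod inc X Y
  rwa [uncross_lam_inter] at this

variable {inc : E → Finset V} {k k1 k2 : ℕ} {𝒯 𝒯1 𝒯2 : Set (Finset E)} {A X Y W : Finset E}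

lemma uncross_tangle_down (h : IsTangle inc k 𝒯) (hX : X ∈ 𝒯) (hYX : Y ⊆ X)
    (hl : hLam inc Y < k) : Y ∈ 𝒯 := by
  rcases h.2.1 Y hl with h' | h'
  · exact h'
  · exfalso
    refine h.2.2.1 X hX Yᶜ h' Yᶜ h' ?_
    apply Finset.eq_univ_of_forall
    intro e
    simp only [mem_union, mem_compl]
    by_cases he : e ∈ Y
    · exact Or.inl (Or.inl (hYX he))
    · exact Or.inr he

lemma uncross_tangle_union (h : IsTangle inc k 𝒯) (hX : X ∈ 𝒯) (hY : Y ∈ 𝒯)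
    (hl : hLam inc (X ∪ Y) < k) : X ∪ Y ∈ 𝒯 := by
  rcases h.2.1 (X ∪ Y) hl with h' | h'
  · exact h'
  · exact absurd (Finset.union_compl (X ∪ Y)) (h.2.2.1 X hX Y hY (X ∪ Y)ᶜ h')

/-- If a corner `A ∪ W` of small order lies in `𝒯1`, it distinguishes `𝒯1` from `𝒯2`. -/
lemma uncross_good (ht1 : IsTangle inc k1 𝒯1) (ht2 : IsTangle inc k2 𝒯2)
    (hA2 : Aᶜ ∈ 𝒯2) (hmem : A ∪ W ∈ 𝒯1) (hl2 : hLam inc (A ∪ W) < k2) :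
    DistinguishesTwoTangles inc (A ∪ W) :=
  ⟨k1, k2, 𝒯1, 𝒯2, ht1, ht2, hmem,
    uncross_tangle_down ht2 hA2
      (by rw [Finset.compl_union]; exact Finset.inter_subset_left)
      (by rw [uncross_lam_compl]; exact hl2)⟩

/-- The case where both corners on the `A`-side have small order. -/
lemma uncross_same (ht1 : IsTangle inc k1 𝒯1) (ht2 : IsTangle inc k2 𝒯2)
    (hA1 : A ∈ 𝒯1) (hA2 : Aᶜ ∈ 𝒯2)
    (ha : hLam inc (A ∪ W) ≤ hLam inc A) (hb : hLam inc (A ∪ Wᶜ) ≤ hLam inc A)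
    (hk1 : hLam inc A < k1) (hk2 : hLam inc A < k2) :
    DistinguishesTwoTangles inc (A ∪ W) ∨ DistinguishesTwoTangles inc (A ∪ Wᶜ) := by
  rcases ht1.2.1 (A ∪ W) (lt_of_le_of_lt ha hk1) with h1 | h1
  · exact Or.inl (uncross_good ht1 ht2 hA2 h1 (lt_of_le_of_lt ha hk2))
  rcases ht1.2.1 (A ∪ Wᶜ) (lt_of_le_of_lt hb hk1) with h2 | h2
  · exact Or.inr (uncross_good ht1 ht2 hA2 h2 (lt_of_le_of_lt hb hk2))
  exfalso
  refine ht1.2.2.1 A hA1 (A ∪ W)ᶜ h1 (A ∪ Wᶜ)ᶜ h2 ?_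
  apply Finset.eq_univ_of_forall
  intro e
  simp only [mem_union, mem_compl, Finset.compl_union, mem_inter, compl_compl]
  tauto

set_option maxHeartbeats 1000000 in
/-- The mixed case: `λ(A ∪ W) ≤ λ(A)`, `λ(Aᶜ ∪ Wᶜ) ≤ λ(A)` and `λ(W) ≤ λ(A)`. -/
lemma uncross_mix (ht1 : IsTangle inc k1 𝒯1) (ht2 : IsTangle inc k2 𝒯2)
    (hA1 : A ∈ 𝒯1) (hA2 : Aᶜ ∈ 𝒯2)
    (ha : hLam inc (A ∪ W) ≤ hLam inc A) (hd : hLam inc (Aᶜ ∪ Wᶜ) ≤ hLam inc A)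
    (hw : hLam inc W ≤ hLam inc A)
    (hk1 : hLam inc A < k1) (hk2 : hLam inc A < k2) :
    DistinguishesTwoTangles inc (A ∪ W) ∨ DistinguishesTwoTangles inc (Aᶜ ∪ Wᶜ) ∨
    DistinguishesTwoTangles inc (A ∪ Wᶜ) ∨ DistinguishesTwoTangles inc (Aᶜ ∪ W) := by
  have hA1' : Aᶜᶜ ∈ 𝒯1 := by rwa [compl_compl]
  have hlAc : hLam inc Aᶜ = hLam inc A := uncross_lam_compl inc A
  rcases ht1.2.1 (A ∪ W) (lt_of_le_of_lt ha hk1) with h1 | h1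
  · exact Or.inl (uncross_good ht1 ht2 hA2 h1 (lt_of_le_of_lt ha hk2))
  rcases ht2.2.1 (Aᶜ ∪ Wᶜ) (lt_of_le_of_lt hd hk2) with h2 | h2
  · exact Or.inr (Or.inl (uncross_good ht2 ht1 hA1' h2 (lt_of_le_of_lt hd hk1)))
  have h1' : Aᶜ ∩ Wᶜ ∈ 𝒯1 := by rwa [Finset.compl_union] at h1
  have h2' : A ∩ W ∈ 𝒯2 := by rwa [Finset.compl_union, compl_compl, compl_compl] at h2
  -- the two remaining corners
  have hbc : hLam inc (A ∪ Wᶜ) + hLam inc (Aᶜ ∪ W) ≤ hLam inc A + hLam inc W := by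
    have := uncross_corner inc A Wᶜ
    rwa [compl_compl, uncross_lam_compl] at this
  have hsplit : hLam inc (A ∪ Wᶜ) < min k1 k2 ∨ hLam inc (Aᶜ ∪ W) < min k1 k2 := by
    omega
  rcases hsplit with hb | hc
  · have hu : A ∪ Wᶜ ∈ 𝒯1 := by
      have he : A ∪ Aᶜ ∩ Wᶜ = A ∪ Wᶜ := by
        ext e
        simp only [mem_union, mem_inter, mem_compl]
        tauto
      have := uncross_tangle_union ht1 hA1 h1' (by rw [he]; omega)
      rwa [he] at this
    exact Or.inr (Or.inr (Or.inl (uncross_good ht1 ht2 hA2 hu (by omega))))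
  · have hu : Aᶜ ∪ W ∈ 𝒯2 := by
      have he : Aᶜ ∪ A ∩ W = Aᶜ ∪ W := by
        ext e
        simp only [mem_union, mem_inter, mem_compl]
        tauto
      have := uncross_tangle_union ht2 hA2 h2' (by rw [he]; omega)
      rwa [he] at this
    exact Or.inr (Or.inr (Or.inr (uncross_good ht2 ht1 hA1' hu (by omega))))

set_option maxHeartbeats 1000000 in
/-- Core lemma: `W` well-linked, `Wᶜ` `k`-well-linked. -/
lemma uncross_core (ht1 : IsTangle inc k1 𝒯1) (ht2 : IsTangle inc k2 𝒯2)
    (hA1 : A ∈ 𝒯1) (hA2 : Aᶜ ∈ 𝒯2) (hk : hLam inc A < k)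
    (hWL : WellLinked inc W) (hKW : KWellLinked inc k Wᶜ) :
    ∃ A' B' : Finset E, (A' = A ∨ A' = Aᶜ) ∧ (B' = W ∨ B' = Wᶜ) ∧
      DistinguishesTwoTangles inc (A' ∪ B') := by
  have hk1 : hLam inc A < k1 := ht1.1 A hA1
  have hk2 : hLam inc A < k2 := by
    have := ht2.1 Aᶜ hA2
    rwa [uncross_lam_compl] at this
  have hlAc : hLam inc Aᶜ = hLam inc A := uncross_lam_compl inc A
  have hlWc : hLam inc Wᶜ = hLam inc W := uncross_lam_compl inc W
  -- corner submodularity instances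
  have s1 : hLam inc (A ∪ W) + hLam inc (Aᶜ ∪ Wᶜ) ≤ hLam inc A + hLam inc W :=
    uncross_corner inc A W
  have s2 : hLam inc (A ∪ Wᶜ) + hLam inc (Aᶜ ∪ W) ≤ hLam inc A + hLam inc W := by
    have := uncross_corner inc A Wᶜ
    rwa [compl_compl, uncross_lam_compl] at this
  -- well-linkedness of W, applied to the bipartition (W ∩ A, W ∩ Aᶜ)
  have hWLr := hWL (W ∩ A) (W ∩ Aᶜ)
    (disjoint_compl_right.mono Finset.inter_subset_right Finset.inter_subset_right)
    (by rw [← Finset.inter_union_distrib_left, Finset.union_compl, Finset.inter_univ])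
  rw [uncross_lam_inter inc W A, uncross_lam_inter inc W Aᶜ, compl_compl,
    union_comm Wᶜ Aᶜ, union_comm Wᶜ A] at hWLr
  -- hWLr : λ W ≤ λ (Aᶜ ∪ Wᶜ) ∨ λ W ≤ λ (A ∪ Wᶜ)
  -- k-well-linkedness of Wᶜ, applied to the bipartition (Wᶜ ∩ A, Wᶜ ∩ Aᶜ)
  have hKWr := hKW (Wᶜ ∩ A) (Wᶜ ∩ Aᶜ)
    (disjoint_compl_right.mono Finset.inter_subset_right Finset.inter_subset_right)
    (by rw [← Finset.inter_union_distrib_left, Finset.union_compl, Finset.inter_univ])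
  rw [uncross_lam_inter inc Wᶜ A, uncross_lam_inter inc Wᶜ Aᶜ, compl_compl, compl_compl,
    union_comm W Aᶜ, union_comm W A, hlWc] at hKWr
  -- hKWr : λ W ≤ λ (Aᶜ ∪ W) ∨ λ W ≤ λ (A ∪ W) ∨ (k ≤ λ (Aᶜ ∪ W) ∧ k ≤ λ (A ∪ W))
  -- derive the corner bounds
  have hW1 : hLam inc (A ∪ W) ≤ hLam inc A ∨ hLam inc (Aᶜ ∪ W) ≤ hLam inc A := by
    rcases hWLr with h | h
    · left; omega
    · right; omega
  rcases hKWr with hc1 | hKWr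
  · -- λ W ≤ λ (Aᶜ ∪ W) ⇒ λ (A ∪ Wᶜ) ≤ λ A
    have hb : hLam inc (A ∪ Wᶜ) ≤ hLam inc A := by omega
    rcases hWLr with hw1 | hw2
    · -- λ (A ∪ W) ≤ λ A : SAME case at A
      have ha : hLam inc (A ∪ W) ≤ hLam inc A := by omega
      rcases uncross_same ht1 ht2 hA1 hA2 ha hb hk1 hk2 with h | h
      · exact ⟨A, W, Or.inl rfl, Or.inl rfl, h⟩
      · exact ⟨A, Wᶜ, Or.inl rfl, Or.inr rfl, h⟩
    · -- λ (Aᶜ ∪ W) ≤ λ A and λ W ≤ λ A : MIX case at Aᶜ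
      have hc : hLam inc (Aᶜ ∪ W) ≤ hLam inc A := by omega
      have hw : hLam inc W ≤ hLam inc A := by omega
      have hA2' : Aᶜᶜ ∈ 𝒯1 := by rwa [compl_compl]
      have hmix := uncross_mix ht2 ht1 hA2 hA2'
        (by rw [hlAc]; exact hc) (by rw [compl_compl, hlAc]; exact hb)
        (by rw [hlAc]; exact hw) (by omega) (by omega)
      rw [compl_compl] at hmix
      rcases hmix with h | h | h | h
      · exact ⟨Aᶜ, W, Or.inr rfl, Or.inl rfl, h⟩
      · exact ⟨A, Wᶜ, Or.inl rfl, Or.inr rfl, h⟩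
      · exact ⟨Aᶜ, Wᶜ, Or.inr rfl, Or.inr rfl, h⟩
      · exact ⟨A, W, Or.inl rfl, Or.inl rfl, h⟩
  rcases hKWr with hc2 | hc3
  · -- λ W ≤ λ (A ∪ W) ⇒ λ (Aᶜ ∪ Wᶜ) ≤ λ A
    have hd : hLam inc (Aᶜ ∪ Wᶜ) ≤ hLam inc A := by omega
    rcases hWLr with hw1 | hw2
    · -- λ (A ∪ W) ≤ λ A and λ W ≤ λ A : MIX case at A
      have ha : hLam inc (A ∪ W) ≤ hLam inc A := by omega
      have hw : hLam inc W ≤ hLam inc A := by omega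
      rcases uncross_mix ht1 ht2 hA1 hA2 ha hd hw hk1 hk2 with h | h | h | h
      · exact ⟨A, W, Or.inl rfl, Or.inl rfl, h⟩
      · exact ⟨Aᶜ, Wᶜ, Or.inr rfl, Or.inr rfl, h⟩
      · exact ⟨A, Wᶜ, Or.inl rfl, Or.inr rfl, h⟩
      · exact ⟨Aᶜ, W, Or.inr rfl, Or.inl rfl, h⟩
    · -- λ (Aᶜ ∪ W) ≤ λ A and λ (Aᶜ ∪ Wᶜ) ≤ λ A : SAME case at Aᶜ
      have hc : hLam inc (Aᶜ ∪ W) ≤ hLam inc A := by omega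
      have hA2' : Aᶜᶜ ∈ 𝒯1 := by rwa [compl_compl]
      rcases uncross_same ht2 ht1 hA2 hA2'
        (by rw [hlAc]; exact hc) (W := W) (by rw [hlAc]; exact hd)
        (by omega) (by omega) with h | h
      · exact ⟨Aᶜ, W, Or.inr rfl, Or.inl rfl, h⟩
      · exact ⟨Aᶜ, Wᶜ, Or.inr rfl, Or.inr rfl, h⟩
  · -- impossible third case
    exfalso
    rcases hW1 with h | h <;> omega

end UncrossAux


/-- Let `(A, Ā)` be a separation of order `< k` that distinguishes two tangles, and
`(B, B̄)` a mixed-`k`-well-linked separation. Then there are orientations `(A', Ā')` of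
`(A, Ā)` and `(B', B̄')` of `(B, B̄)` such that `(A' ∪ B', Ā' ∩ B̄')` distinguishes two
tangles. -/
theorem distinguishing_uncross_mixed (inc : E → Finset V)
    (hcov : ∀ v : V, ∃ e : E, v ∈ inc e) (k : ℕ)
    (A : Finset E) (hord : hLam inc A < k) (hdist : DistinguishesTwoTangles inc A)
    (B : Finset E) (hmix : MixedKWellLinked inc k B) :
    ∃ A' B' : Finset E, (A' = A ∨ A' = Aᶜ) ∧ (B' = B ∨ B' = Bᶜ) ∧
      DistinguishesTwoTangles inc (A' ∪ B') := by
  obtain ⟨k1, k2, 𝒯1, 𝒯2, ht1, ht2, hA1, hA2⟩ := hdist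
  rcases hmix with ⟨hWB, hKBc⟩ | ⟨hWBc, hKB⟩
  · exact uncross_core ht1 ht2 hA1 hA2 hord hWB hKBc
  · have hKB' : KWellLinked inc k Bᶜᶜ := by rwa [compl_compl]
    obtain ⟨A', B', hA', hB', hd⟩ := uncross_core ht1 ht2 hA1 hA2 hord hWBc hKB'
    rw [compl_compl] at hB'
    exact ⟨A', B', hA', hB'.symm, hd⟩
end
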